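/- arXiv:2305.03116 — 5 statements merged into one kernel-verified Lean document; each statement's English description precedes it below -/
import Mathlib

section
/- (Calderón transference, strong type) For every map O admitting the approximation properties below, every nontrivial σ-finite system X with d commuting invertible measure-preserving transformations, every family P of integer-valued polynomials, and every Hölder tuple p, the best strong-type constant on X is dominated by that on the canonical system: C_O^P(X, p, s) ≤ C_O^P(X_d, p, s). -/
open MeasureTheory ENNReal NNReal Filter

noncomputable section

variable {X : Type*} [MeasurableSpace X]

/-- The composite transformation `T₁^{P_{1,j}(n)} ⋯ T_d^{P_{d,j}(n)}`. -/
def compT {d m k : ℕ} (T : Fin d → Equiv.Perm X)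
    (P : Fin d → Fin m → MvPolynomial (Fin k) ℤ) (j : Fin m) (n : Fin k → ℤ) :
    Equiv.Perm X :=
  (List.ofFn fun i : Fin d => T i ^ MvPolynomial.eval n (P i j)).prod

/-- The multilinear polynomial average
`A_N^P f(x) = N^{-k} Σ_{n ∈ {1,…,N}^k} Π_j f_j(T₁^{P_{1,j}(n)} ⋯ T_d^{P_{d,j}(n)} x)`. -/
def polyAvg {d m k : ℕ} (T : Fin d → Equiv.Perm X)
    (P : Fin d → Fin m → MvPolynomial (Fin k) ℤ) (f : Fin m → X → ℝ)
    (N : ℕ) (x : X) : ℝ :=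
  (∑ n ∈ Fintype.piFinset fun _ : Fin k => Finset.Icc (1 : ℤ) (N : ℤ),
      ∏ j : Fin m, f j ((compT T P j n) x)) / (N : ℝ) ^ k

/-- The best constant `C_O^P(X, p, s)` in the strong type inequality
`‖O(A_N^P f : N ∈ ℕ)‖_{p₀} ≤ C Π_j ‖f_j‖_{p_j}`. -/
def strongConstO {d m k : ℕ} (μ : Measure X) (T : Fin d → Equiv.Perm X)
    (P : Fin d → Fin m → MvPolynomial (Fin k) ℤ)
    (O : (ℕ → ℝ) → ℝ≥0∞) (p : Fin (m + 1) → ℝ) : ℝ≥0∞ :=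
  sInf {C | ∀ f : Fin m → X → ℝ,
    (∀ j : Fin m, MemLp (f j) (ENNReal.ofReal (p j.succ)) μ) →
    (∫⁻ x, O (fun N => polyAvg T P f (N + 1) x) ^ p 0 ∂μ) ^ (1 / p 0) ≤
      C * ∏ j : Fin m, eLpNorm (f j) (ENNReal.ofReal (p j.succ)) μ}

/-- The best constant `C_O^P(X, p, w)` in the weak type inequality
`‖O(A_N^P f : N ∈ ℕ)‖_{p₀,∞} ≤ C Π_j ‖f_j‖_{p_j}`, where
`‖g‖_{p₀,∞} = sup_{λ>0} λ μ({x : |g(x)| ≥ λ})^{1/p₀}`. -/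
def weakConstO {d m k : ℕ} (μ : Measure X) (T : Fin d → Equiv.Perm X)
    (P : Fin d → Fin m → MvPolynomial (Fin k) ℤ)
    (O : (ℕ → ℝ) → ℝ≥0∞) (p : Fin (m + 1) → ℝ) : ℝ≥0∞ :=
  sInf {C | ∀ f : Fin m → X → ℝ,
    (∀ j : Fin m, MemLp (f j) (ENNReal.ofReal (p j.succ)) μ) →
    ∀ l : ℝ≥0∞, l * μ {x | l ≤ O fun N => polyAvg T P f (N + 1) x} ^ (1 / p 0) ≤
      C * ∏ j : Fin m, eLpNorm (f j) (ENNReal.ofReal (p j.succ)) μ}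

/-- The shifts `T_{d,i}(l) = l + e_i` of the canonical system `X_d = ℤ^d`. -/
def canShift (d : ℕ) (i : Fin d) : Equiv.Perm (Fin d → ℤ) :=
  Equiv.addRight (Pi.single i 1)

/-! Fix `x` and a radius `R`. Once the averages are truncated to `N ≤ K`, the polynomial
displacements are bounded by some `ρ`, so on the cube `|l| ≤ R` of `ℤ^d` the averages of `f` along
the orbit `l ↦ T^l x` are the averages, for the shifts, of the function `w ↦ f(T^w x)` cut off to
the cube `|w| ≤ R + ρ`. The inequality on `ℤ^d` applied to that function bounds the sum over `l`;
integrating in `x`, the `T^l` preserve `μ` and Hölder's inequality splits the product, which gives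
`(2R+1)^d ∫ G ≤ (2(R+ρ)+1)^d (C ∏ ‖f_j‖_{p_j})^{p_0}` for the truncated maximal function `G`.
Letting `R → ∞` removes the boundary loss, and Fatou's lemma removes the truncation. -/

open Finset

section PermGroup

variable (μ : Measure X)

def measurePreservingPerms : Subgroup (Equiv.Perm X) where
  carrier := {e | MeasurePreserving e μ μ ∧ Measurable e.symm}
  mul_mem' := fun ⟨he, he'⟩ ⟨hf, hf'⟩ => ⟨he.comp hf, hf'.comp he'⟩
  one_mem' := ⟨MeasurePreserving.id μ, measurable_id⟩
  inv_mem' := fun {e} ⟨he, he'⟩ => ⟨he.symm ⟨e, he.measurable, he'⟩, he.measurable⟩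

end PermGroup

section ProdZPow

variable {G : Type*} [Group G] {d : ℕ}

def prodZPow (T : Fin d → G) (l : Fin d → ℤ) : G :=
  (List.ofFn fun i => T i ^ l i).prod

lemma prodZPow_succ (T : Fin (d + 1) → G) (l : Fin (d + 1) → ℤ) :
    prodZPow T l = T 0 ^ l 0 * prodZPow (fun i => T i.succ) (fun i => l i.succ) := by
  rw [prodZPow, List.ofFn_succ, List.prod_cons]; rfl

lemma prodZPow_add {T : Fin d → G} (hT : ∀ i i', Commute (T i) (T i')) (a b : Fin d → ℤ) :
    prodZPow T (a + b) = prodZPow T a * prodZPow T b := by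
  induction d with
  | zero => simp [prodZPow]
  | succ d ih =>
    have hcomm : Commute (T 0 ^ b 0) (prodZPow (fun i => T i.succ) (fun i => a i.succ)) :=
      Commute.list_prod_right _ _ fun y hy => by
        obtain ⟨i, rfl⟩ := List.mem_ofFn.1 hy
        exact (hT 0 i.succ).zpow_zpow _ _
    rw [prodZPow_succ, prodZPow_succ, prodZPow_succ, Pi.add_apply, zpow_add,
      show (fun i : Fin d => (a + b) i.succ) = (fun i => a i.succ) + (fun i => b i.succ) from rfl,
      ih fun i i' => hT i.succ i'.succ, mul_assoc, ← mul_assoc (T 0 ^ b 0), hcomm.eq]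
    simp only [mul_assoc]

lemma prodZPow_mem {H : Subgroup G} {T : Fin d → G} (hT : ∀ i, T i ∈ H) (l : Fin d → ℤ) :
    prodZPow T l ∈ H :=
  H.list_prod_mem fun _ hy => by
    obtain ⟨i, rfl⟩ := List.mem_ofFn.1 hy
    exact H.zpow_mem (hT i) _

end ProdZPow

lemma prodZPow_canShift {d : ℕ} (w : Fin d → ℤ) :
    prodZPow (canShift d) w = Equiv.addRight w := by
  let addRightHom : Multiplicative (Fin d → ℤ) →* Equiv.Perm (Fin d → ℤ) :=
    { toFun := fun a => Equiv.addRight a.toAdd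
      map_one' := Equiv.addRight_zero
      map_mul' := fun a b => by rw [toAdd_mul, add_comm, Equiv.addRight_add] }
  have hfactor : ∀ i, canShift d i ^ w i = addRightHom (.ofAdd (Pi.single i (w i))) := fun i => by
    rw [canShift, Equiv.zsmul_addRight, ← Pi.single_smul', smul_eq_mul, mul_one]; rfl
  rw [prodZPow, funext hfactor, List.ofFn_comp', ← map_list_prod, List.prod_ofFn, ← ofAdd_sum,
    Finset.univ_sum_single]
  rfl

def cube (d R : ℕ) : Finset (Fin d → ℤ) :=
  Fintype.piFinset fun _ => Icc (-(R : ℤ)) R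

lemma card_cube (d R : ℕ) : #(cube d R) = (2 * R + 1) ^ d := by
  have h : #(Icc (-(R : ℤ)) R) = 2 * R + 1 := by rw [Int.card_Icc]; omega
  simp [cube, h]

lemma add_mem_cube {d R ρ : ℕ} {l v : Fin d → ℤ} (hl : l ∈ cube d R)
    (hv : ∀ i, (v i).natAbs ≤ ρ) : l + v ∈ cube d (R + ρ) := by
  simp only [cube, Fintype.mem_piFinset, mem_Icc] at hl ⊢
  intro i
  have := hl i
  have := hv i
  simp only [Pi.add_apply]
  omega

lemma tendsto_card_cube_div (d ρ : ℕ) :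
    Tendsto (fun R => (#(cube d (R + ρ)) : ℝ) / #(cube d R)) atTop (nhds 1) := by
  have h := (tendsto_add_mul_div_add_mul_atTop_nhds (2 * ρ + 1 : ℝ) 1 2 two_ne_zero).pow d
  rw [div_self two_ne_zero, one_pow] at h
  refine h.congr fun R => ?_
  simp only [card_cube]
  push_cast
  rw [div_pow]
  ring_nf

lemma le_of_forall_card_cube_mul_le {d ρ : ℕ} {J B : ℝ≥0∞}
    (h : ∀ R, #(cube d R) * J ≤ #(cube d (R + ρ)) * B) : J ≤ B := by
  rcases eq_or_ne B ⊤ with rfl | hB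
  · exact le_top
  have hJ : ∀ R, J ≤ ENNReal.ofReal ((#(cube d (R + ρ)) : ℝ) / #(cube d R)) * B := fun R => by
    have hcard : (#(cube d R) : ℝ≥0∞) ≠ 0 := by simp [card_cube]
    rw [ENNReal.ofReal_div_of_pos (by simp only [card_cube]; positivity), ofReal_natCast,
      ofReal_natCast, div_eq_mul_inv, mul_right_comm, ← div_eq_mul_inv,
      ENNReal.le_div_iff_mul_le (Or.inl hcard) (Or.inl (natCast_ne_top _)), mul_comm]
    exact h R
  simpa using ge_of_tendsto
    (ENNReal.Tendsto.mul_const (ENNReal.tendsto_ofReal (tendsto_card_cube_div d ρ)) (Or.inr hB))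
    (Eventually.of_forall hJ)

lemma eLpNorm_ofReal_rpow {E : Type*} [NormedAddCommGroup E] {μ : Measure X} (f : X → E)
    {q : ℝ} (hq : 0 < q) (r : ℝ) :
    eLpNorm f (ENNReal.ofReal q) μ ^ r = (∫⁻ x, ‖f x‖ₑ ^ q ∂μ) ^ (r / q) := by
  rw [eLpNorm_eq_lintegral_rpow_enorm_toReal (ofReal_pos.2 hq).ne' ofReal_ne_top,
    toReal_ofReal hq.le, ← ENNReal.rpow_mul, one_div_mul_eq_div]

section CountingMeasure

variable {α E : Type*} [MeasurableSpace α] [MeasurableSingletonClass α] [NormedAddCommGroup E]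

lemma lintegral_enorm_indicator_rpow_count (s : Finset α) (g : α → E) {q : ℝ} (hq : 0 < q) :
    ∫⁻ a, ‖(s : Set α).indicator g a‖ₑ ^ q ∂Measure.count = ∑ a ∈ s, ‖g a‖ₑ ^ q := by
  rw [lintegral_count, tsum_eq_sum fun a ha => by
    simp [Set.indicator_of_notMem (show a ∉ (s : Set α) from ha), hq]]
  exact sum_congr rfl fun a ha => by rw [Set.indicator_of_mem (show a ∈ (s : Set α) from ha)]

lemma memLp_indicator_count [Countable α] (s : Finset α) (g : α → E) {q : ℝ} (hq : 0 < q) :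
    MemLp ((s : Set α).indicator g) (ENNReal.ofReal q) Measure.count := by
  refine ⟨StronglyMeasurable.of_discrete.aestronglyMeasurable, ?_⟩
  have h := eLpNorm_ofReal_rpow (μ := Measure.count) ((s : Set α).indicator g) hq 1
  rw [ENNReal.rpow_one, lintegral_enorm_indicator_rpow_count s g hq] at h
  rw [h]
  exact ENNReal.rpow_lt_top_of_nonneg (by positivity)
    (ENNReal.sum_ne_top.2 fun a _ => ENNReal.rpow_ne_top_of_nonneg hq.le enorm_ne_top)

end CountingMeasure

lemma ENNReal.rpow_sum {ι : Type*} (s : Finset ι) {c : ℝ≥0∞} (hc0 : c ≠ 0) (hctop : c ≠ ⊤)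
    (θ : ι → ℝ) : c ^ (∑ i ∈ s, θ i) = ∏ i ∈ s, c ^ θ i := by
  classical
  induction s using Finset.induction with
  | empty => simp
  | insert a s ha ih => rw [sum_insert ha, prod_insert ha, ENNReal.rpow_add _ _ hc0 hctop, ih]

section MeasurePreserving

variable {μ : Measure X}

lemma lintegral_sum_comp_eq_card_mul {ι : Type*} (s : Finset ι) {e : ι → X → X}
    (he : ∀ i, MeasurePreserving (e i) μ μ) {g : X → ℝ≥0∞} (hg : Measurable g) :
    ∫⁻ x, ∑ i ∈ s, g (e i x) ∂μ = #s * ∫⁻ x, g x ∂μ := by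
  rw [lintegral_finsetSum (f := fun i x => g (e i x)) s fun i _ => hg.comp (he i).measurable,
    sum_congr rfl fun i _ => (he i).lintegral_comp hg, sum_const, nsmul_eq_mul]

lemma lintegral_prod_sum_comp_rpow_le {ι κ : Type*} [Fintype ι] {s : Finset κ} (hs : s.Nonempty)
    {e : κ → X → X} (he : ∀ w, MeasurePreserving (e w) μ μ) {f : ι → X → ℝ}
    (hf : ∀ j, Measurable (f j))
    {r : ℝ} {q : ι → ℝ} (hr : 0 < r) (hq : ∀ j, 0 < q j) (hHolder : ∑ j, 1 / q j = 1 / r) :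
    ∫⁻ x, ∏ j, (∑ w ∈ s, ‖f j (e w x)‖ₑ ^ q j) ^ (r / q j) ∂μ ≤
      #s * ∏ j, eLpNorm (f j) (ENNReal.ofReal (q j)) μ ^ r := by
  have hθ : ∑ j, r / q j = 1 := by
    simp_rw [div_eq_mul_one_div r]
    rw [← mul_sum, hHolder, mul_one_div_cancel hr.ne']
  have hθ0 : ∀ j, 0 ≤ r / q j := fun j => (div_pos hr (hq j)).le
  have hg : ∀ j, Measurable fun x => ‖f j x‖ₑ ^ q j := fun j => (hf j).enorm.pow_const _
  have hcard : (#s : ℝ≥0∞) ≠ 0 := by simpa using hs.ne_empty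
  calc _ ≤ ∏ j, (∫⁻ x, ∑ w ∈ s, ‖f j (e w x)‖ₑ ^ q j ∂μ) ^ (r / q j) :=
        ENNReal.lintegral_prod_norm_pow_le _ (fun j _ => (Finset.measurable_sum _ fun w _ =>
          (hg j).comp (he w).measurable).aemeasurable) hθ fun j _ => hθ0 j
    _ = ∏ j, (#s : ℝ≥0∞) ^ (r / q j) * eLpNorm (f j) (ENNReal.ofReal (q j)) μ ^ r := by
        refine prod_congr rfl fun j _ => ?_
        rw [lintegral_sum_comp_eq_card_mul s he (hg j), ENNReal.mul_rpow_of_nonneg _ _ (hθ0 j),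
          eLpNorm_ofReal_rpow _ (hq j)]
    _ = _ := by
        rw [prod_mul_distrib, ← ENNReal.rpow_sum _ hcard (natCast_ne_top _), hθ, ENNReal.rpow_one]

end MeasurePreserving

section Averages

variable {d m k : ℕ} {T : Fin d → Equiv.Perm X} {P : Fin d → Fin m → MvPolynomial (Fin k) ℤ}

omit [MeasurableSpace X] in
lemma compT_eq_prodZPow (T : Fin d → Equiv.Perm X) (P : Fin d → Fin m → MvPolynomial (Fin k) ℤ)
    (j : Fin m) (n : Fin k → ℤ) :
    compT T P j n = prodZPow T fun i => MvPolynomial.eval n (P i j) :=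
  rfl

omit [MeasurableSpace X] in
lemma polyAvg_congr {f g : Fin m → X → ℝ} {N : ℕ} {x : X}
    (h : ∀ j, ∀ n ∈ Fintype.piFinset fun _ => Icc (1 : ℤ) N,
      f j (compT T P j n x) = g j (compT T P j n x)) :
    polyAvg T P f N x = polyAvg T P g N x := by
  unfold polyAvg
  congr 1
  exact sum_congr rfl fun n hn => prod_congr rfl fun j _ => h j n hn

lemma exists_natAbs_eval_le (P : Fin d → Fin m → MvPolynomial (Fin k) ℤ) (K : ℕ) :
    ∃ ρ : ℕ, ∀ N ≤ K, ∀ i j, ∀ n ∈ Fintype.piFinset fun _ : Fin k => Icc (1 : ℤ) N,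
      (MvPolynomial.eval n (P i j)).natAbs ≤ ρ := by
  let size : (Fin d × Fin m) × (Fin k → ℤ) → ℕ := fun q =>
    (MvPolynomial.eval q.2 (P q.1.1 q.1.2)).natAbs
  refine ⟨(univ ×ˢ Fintype.piFinset fun _ : Fin k => Icc (1 : ℤ) K).sup size,
    fun N hN i j n hn => ?_⟩
  have hnK : n ∈ Fintype.piFinset fun _ : Fin k => Icc (1 : ℤ) K :=
    Fintype.piFinset_subset _ _ (fun _ => Icc_subset_Icc_right (by exact_mod_cast hN)) hn
  have hmem : ((i, j), n) ∈ univ ×ˢ Fintype.piFinset fun _ : Fin k => Icc (1 : ℤ) K :=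
    mem_product.2 ⟨mem_univ _, hnK⟩
  exact (le_sup hmem : size ((i, j), n) ≤ _)

omit [MeasurableSpace X] in
lemma polyAvg_canShift_orbit (hT : ∀ i i', Commute (T i) (T i')) (f : Fin m → X → ℝ) (N : ℕ)
    (x : X) (l : Fin d → ℤ) :
    polyAvg (canShift d) P (fun j w => f j (prodZPow T w x)) N l =
      polyAvg T P f N (prodZPow T l x) := by
  unfold polyAvg
  congr 1
  refine sum_congr rfl fun n _ => prod_congr rfl fun j _ => ?_
  rw [compT_eq_prodZPow, compT_eq_prodZPow, prodZPow_canShift, Equiv.coe_addRight]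
  dsimp only
  rw [add_comm l, prodZPow_add hT, Equiv.Perm.mul_apply]

omit [MeasurableSpace X] in
lemma polyAvg_canShift_indicator_cube {ρ N R : ℕ}
    (hρ : ∀ i j, ∀ n ∈ Fintype.piFinset fun _ : Fin k => Icc (1 : ℤ) N,
      (MvPolynomial.eval n (P i j)).natAbs ≤ ρ)
    {l : Fin d → ℤ} (hl : l ∈ cube d R) (F : Fin m → (Fin d → ℤ) → ℝ) :
    polyAvg (canShift d) P (fun j => (cube d (R + ρ) : Set (Fin d → ℤ)).indicator (F j)) N l =
      polyAvg (canShift d) P F N l :=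
  polyAvg_congr fun j n hn => by
    rw [compT_eq_prodZPow, prodZPow_canShift, Equiv.coe_addRight]
    exact Set.indicator_of_mem (add_mem_cube hl fun i => hρ i j n hn) _

variable {μ : Measure X}

lemma measurePreserving_compT (hT : ∀ i, T i ∈ measurePreservingPerms μ) (j : Fin m)
    (n : Fin k → ℤ) : MeasurePreserving (compT T P j n) μ μ :=
  (prodZPow_mem hT _).1

lemma measurable_polyAvg (hT : ∀ i, T i ∈ measurePreservingPerms μ) {f : Fin m → X → ℝ}
    (hf : ∀ j, Measurable (f j)) (N : ℕ) : Measurable (polyAvg T P f N) :=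
  (Finset.measurable_sum _ fun n _ => Finset.measurable_prod _ fun j _ =>
    (hf j).comp (measurePreserving_compT hT j n).measurable).div_const _

lemma ae_polyAvg_eq_of_ae_eq (hT : ∀ i, T i ∈ measurePreservingPerms μ)
    {f g : Fin m → X → ℝ} (hfg : ∀ j, f j =ᵐ[μ] g j) :
    ∀ᵐ x ∂μ, ∀ N, polyAvg T P f N x = polyAvg T P g N x := by
  have h : ∀ᵐ x ∂μ, ∀ j n, f j (compT T P j n x) = g j (compT T P j n x) := by
    simp only [ae_all_iff]
    exact fun j n => (measurePreserving_compT hT j n).quasiMeasurePreserving.ae_eq_comp (hfg j)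
  filter_upwards [h] with x hx N using polyAvg_congr fun j n _ => hx j n

end Averages

def IsStrongTypeConst {d m k : ℕ} (μ : Measure X) (T : Fin d → Equiv.Perm X)
    (P : Fin d → Fin m → MvPolynomial (Fin k) ℤ) (O : (ℕ → ℝ) → ℝ≥0∞) (p : Fin (m + 1) → ℝ)
    (C : ℝ≥0∞) : Prop :=
  ∀ f : Fin m → X → ℝ, (∀ j : Fin m, MemLp (f j) (ENNReal.ofReal (p j.succ)) μ) →
    (∫⁻ x, O (fun N => polyAvg T P f (N + 1) x) ^ p 0 ∂μ) ^ (1 / p 0) ≤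
      C * ∏ j : Fin m, eLpNorm (f j) (ENNReal.ofReal (p j.succ)) μ

section Transference

variable {μ : Measure X} {d m k : ℕ} {T : Fin d → Equiv.Perm X}
  {P : Fin d → Fin m → MvPolynomial (Fin k) ℤ} {O : (ℕ → ℝ) → ℝ≥0∞}
  {OK : (K : ℕ) → (Fin K → ℝ) → ℝ≥0} {p : Fin (m + 1) → ℝ} {C : ℝ≥0∞}

lemma IsStrongTypeConst.of_measurable (hT : ∀ i, T i ∈ measurePreservingPerms μ)
    (h : ∀ f : Fin m → X → ℝ, (∀ j, Measurable (f j)) →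
      (∫⁻ x, O (fun N => polyAvg T P f (N + 1) x) ^ p 0 ∂μ) ^ (1 / p 0) ≤
        C * ∏ j : Fin m, eLpNorm (f j) (ENNReal.ofReal (p j.succ)) μ) :
    IsStrongTypeConst μ T P O p C := by
  intro f hf
  set g : Fin m → X → ℝ := fun j => (hf j).1.mk (f j)
  have hfg : ∀ j, f j =ᵐ[μ] g j := fun j => (hf j).1.ae_eq_mk
  have hint : ∫⁻ x, O (fun N => polyAvg T P f (N + 1) x) ^ p 0 ∂μ =
      ∫⁻ x, O (fun N => polyAvg T P g (N + 1) x) ^ p 0 ∂μ :=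
    lintegral_congr_ae ((ae_polyAvg_eq_of_ae_eq (P := P) hT hfg).mono fun x hx => by simp only [hx])
  rw [hint, prod_congr rfl fun j _ => eLpNorm_congr_ae (hfg j)]
  exact h g fun j => (hf j).1.stronglyMeasurable_mk.measurable

lemma lintegral_rpow_le_of_forall_approx (hOKm : ∀ K, Measurable (OK K))
    (hO2 : ∀ a : ℕ → ℝ,
      Tendsto (fun K => ((OK K fun i => a i : ℝ≥0) : ℝ≥0∞)) atTop (nhds (O a)))
    {a : X → ℕ → ℝ} (ha : ∀ N, Measurable fun x => a x N) {r : ℝ} {A : ℝ≥0∞}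
    (h : ∀ K, ∫⁻ x, ((OK K fun i => a x i : ℝ≥0) : ℝ≥0∞) ^ r ∂μ ≤ A) :
    ∫⁻ x, O (a x) ^ r ∂μ ≤ A :=
  calc ∫⁻ x, O (a x) ^ r ∂μ
      = ∫⁻ x, liminf (fun K => ((OK K fun i => a x i : ℝ≥0) : ℝ≥0∞) ^ r) atTop ∂μ :=
        lintegral_congr fun x =>
          (((ENNReal.continuous_rpow_const.tendsto _).comp (hO2 (a x))).liminf_eq).symm
    _ ≤ liminf (fun K => ∫⁻ x, ((OK K fun i => a x i : ℝ≥0) : ℝ≥0∞) ^ r ∂μ) atTop :=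
        lintegral_liminf_le fun K =>
          ((hOKm K).comp (measurable_pi_lambda _ fun i => ha i)).coe_nnreal_ennreal.pow_const _
    _ ≤ A := (liminf_le_liminf (Eventually.of_forall h)).trans_eq (liminf_const A)

omit [MeasurableSpace X] in
lemma sum_cube_truncated_rpow_le {K : ℕ} (hT : ∀ i i', Commute (T i) (T i'))
    (hO1 : ∀ a : ℕ → ℝ, ((OK K fun i => a i : ℝ≥0) : ℝ≥0∞) ≤ O a) (hp : ∀ i, 0 < p i)
    (hC : IsStrongTypeConst Measure.count (canShift d) P O p C) {ρ : ℕ}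
    (hρ : ∀ N ≤ K, ∀ i j, ∀ n ∈ Fintype.piFinset fun _ : Fin k => Icc (1 : ℤ) N,
      (MvPolynomial.eval n (P i j)).natAbs ≤ ρ)
    (f : Fin m → X → ℝ) (R : ℕ) (x : X) :
    ∑ l ∈ cube d R,
        ((OK K fun i => polyAvg T P f (i + 1) (prodZPow T l x) : ℝ≥0) : ℝ≥0∞) ^ p 0 ≤
      C ^ p 0 * ∏ j, (∑ w ∈ cube d (R + ρ), ‖f j (prodZPow T w x)‖ₑ ^ p j.succ) ^
        (p 0 / p j.succ) := by
  set F : Fin m → (Fin d → ℤ) → ℝ := fun j =>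
    (cube d (R + ρ) : Set (Fin d → ℤ)).indicator fun w => f j (prodZPow T w x)
  have hF : ∀ j, MemLp (F j) (ENNReal.ofReal (p j.succ)) Measure.count := fun j =>
    memLp_indicator_count _ _ (hp j.succ)
  have havg : ∀ l ∈ cube d R, ∀ N ≤ K,
      polyAvg T P f N (prodZPow T l x) = polyAvg (canShift d) P F N l := fun l hl N hN => by
    rw [polyAvg_canShift_indicator_cube (hρ N hN) hl, polyAvg_canShift_orbit hT]
  calc _ ≤ ∫⁻ l, O (fun N => polyAvg (canShift d) P F (N + 1) l) ^ p 0 ∂Measure.count := by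
        rw [lintegral_count]
        refine (sum_le_sum fun l hl => ?_).trans (ENNReal.sum_le_tsum _)
        rw [show (fun i : Fin K => polyAvg T P f (i + 1) (prodZPow T l x)) =
          fun i : Fin K => polyAvg (canShift d) P F (i + 1) l from
            funext fun i => havg l hl _ i.isLt]
        exact ENNReal.rpow_le_rpow (hO1 _) (hp 0).le
    _ ≤ (C * ∏ j, eLpNorm (F j) (ENNReal.ofReal (p j.succ)) Measure.count) ^ p 0 :=
        (ENNReal.rpow_inv_le_iff (hp 0)).1 (by simpa only [one_div] using hC F hF)
    _ = _ := by
        rw [ENNReal.mul_rpow_of_nonneg _ _ (hp 0).le, ← ENNReal.prod_rpow_of_nonneg (hp 0).le]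
        simp_rw [eLpNorm_ofReal_rpow _ (hp _), F, lintegral_enorm_indicator_rpow_count _ _ (hp _)]

lemma lintegral_truncated_rpow_le {K : ℕ} (hT : ∀ i, T i ∈ measurePreservingPerms μ)
    (hTcomm : ∀ i i', Commute (T i) (T i')) (hOKm : Measurable (OK K))
    (hO1 : ∀ a : ℕ → ℝ, ((OK K fun i => a i : ℝ≥0) : ℝ≥0∞) ≤ O a) (hp : ∀ i, 0 < p i)
    (hHolder : ∑ j : Fin m, 1 / p j.succ = 1 / p 0)
    (hC : IsStrongTypeConst Measure.count (canShift d) P O p C)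
    {f : Fin m → X → ℝ} (hf : ∀ j, Measurable (f j)) :
    ∫⁻ x, ((OK K fun i => polyAvg T P f (i + 1) x : ℝ≥0) : ℝ≥0∞) ^ p 0 ∂μ ≤
      (C * ∏ j, eLpNorm (f j) (ENNReal.ofReal (p j.succ)) μ) ^ p 0 := by
  obtain ⟨ρ, hρ⟩ := exists_natAbs_eval_le P K
  have hTl : ∀ l, MeasurePreserving (⇑(prodZPow T l)) μ μ := fun l => (prodZPow_mem hT l).1
  set G : X → ℝ≥0∞ := fun x => ((OK K fun i => polyAvg T P f (i + 1) x : ℝ≥0) : ℝ≥0∞) ^ p 0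
  have hG : Measurable G := (hOKm.comp (measurable_pi_lambda _ fun i =>
    measurable_polyAvg hT hf _)).coe_nnreal_ennreal.pow_const _
  set H : ℕ → X → ℝ≥0∞ := fun S x =>
    ∏ j, (∑ w ∈ cube d S, ‖f j (prodZPow T w x)‖ₑ ^ p j.succ) ^ (p 0 / p j.succ)
  have hH : ∀ S, Measurable (H S) := fun S => Finset.measurable_prod _ fun j _ =>
    (Finset.measurable_sum _ fun w _ =>
      ((hf j).comp (hTl w).measurable).enorm.pow_const _).pow_const _
  refine le_of_forall_card_cube_mul_le (d := d) (ρ := ρ) fun R => ?_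
  calc #(cube d R) * ∫⁻ x, G x ∂μ = ∫⁻ x, ∑ l ∈ cube d R, G (prodZPow T l x) ∂μ :=
        (lintegral_sum_comp_eq_card_mul _ hTl hG).symm
    _ ≤ ∫⁻ x, C ^ p 0 * H (R + ρ) x ∂μ :=
        lintegral_mono fun x => sum_cube_truncated_rpow_le hTcomm hO1 hp hC hρ f R x
    _ = C ^ p 0 * ∫⁻ x, H (R + ρ) x ∂μ := lintegral_const_mul _ (hH _)
    _ ≤ C ^ p 0 * (#(cube d (R + ρ)) * ∏ j, eLpNorm (f j) (ENNReal.ofReal (p j.succ)) μ ^ p 0) := by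
        gcongr
        exact lintegral_prod_sum_comp_rpow_le ⟨0, by simp [cube]; intro; positivity⟩ hTl hf (hp 0)
          (fun j => hp j.succ) hHolder
    _ = _ := by
        rw [ENNReal.mul_rpow_of_nonneg _ _ (hp 0).le, ENNReal.prod_rpow_of_nonneg (hp 0).le]
        ring

end Transference

theorem calderon_transference_strong_general
    {X : Type*} [MeasurableSpace X] (μ : Measure X)
    (d m k : ℕ)
    (T : Fin d → Equiv.Perm X)
    (hTmp : ∀ i, MeasurePreserving (⇑(T i)) μ μ)
    (hTsm : ∀ i, Measurable (⇑(T i).symm))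
    (hTcomm : ∀ i i', Commute (T i) (T i'))
    (P : Fin d → Fin m → MvPolynomial (Fin k) ℤ)
    (O : (ℕ → ℝ) → ℝ≥0∞)
    (OK : (K : ℕ) → (Fin K → ℝ) → ℝ≥0)
    (hOKm : ∀ K, Measurable (OK K))
    (hO1 : ∀ (a : ℕ → ℝ) (K : ℕ), ((OK K fun i => a i : ℝ≥0) : ℝ≥0∞) ≤ O a)
    (hO2 : ∀ a : ℕ → ℝ,
      Tendsto (fun K => ((OK K fun i => a i : ℝ≥0) : ℝ≥0∞)) atTop (nhds (O a)))
    (p : Fin (m + 1) → ℝ) (hp : ∀ i, 0 < p i)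
    (hHolder : ∑ j : Fin m, 1 / p j.succ = 1 / p 0) :
    strongConstO μ T P O p ≤
      strongConstO (Measure.count : Measure (Fin d → ℤ)) (canShift d) P O p := by
  have hT : ∀ i, T i ∈ measurePreservingPerms μ := fun i => ⟨hTmp i, hTsm i⟩
  refine sInf_le_sInf fun C hC => IsStrongTypeConst.of_measurable hT fun f hf => ?_
  rw [one_div, ENNReal.rpow_inv_le_iff (hp 0)]
  exact lintegral_rpow_le_of_forall_approx hOKm hO2 (fun N => measurable_polyAvg hT hf (N + 1))
    fun K => lintegral_truncated_rpow_le hT hTcomm (hOKm K) (fun a => hO1 a K) hp hHolder hC hf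

/-- Calderón transference principle, strong type: for every admissible `O`, every nontrivial
σ-finite system with commuting invertible bimeasurable measure-preserving transformations,
every family of integer polynomials `P`, and every Hölder tuple `p`,
`C_O^P(X, p, s) ≤ C_O^P(X_d, p, s)` where `X_d = ℤ^d` is the canonical system. -/
theorem calderon_transference_strong
    {X : Type*} [MeasurableSpace X] (μ : Measure X) [SigmaFinite μ]
    (hX : ∃ E : Set X, MeasurableSet E ∧ 0 < μ E ∧ μ E < ∞)
    (d m k : ℕ) (hd : 0 < d) (hm : 0 < m) (hk : 0 < k)
    (T : Fin d → Equiv.Perm X)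
    (hTmp : ∀ i, MeasurePreserving (⇑(T i)) μ μ)
    (hTsm : ∀ i, Measurable (⇑(T i).symm))
    (hTcomm : ∀ i i', Commute (T i) (T i'))
    (P : Fin d → Fin m → MvPolynomial (Fin k) ℤ)
    (O : (ℕ → ℝ) → ℝ≥0∞)
    (OK : (K : ℕ) → (Fin K → ℝ) → ℝ≥0)
    (hOKm : ∀ K, Measurable (OK K))
    (hO1 : ∀ (a : ℕ → ℝ) (K : ℕ), ((OK K fun i => a i : ℝ≥0) : ℝ≥0∞) ≤ O a)
    (hO2 : ∀ a : ℕ → ℝ,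
      Tendsto (fun K => ((OK K fun i => a i : ℝ≥0) : ℝ≥0∞)) atTop (nhds (O a)))
    (p : Fin (m + 1) → ℝ) (hp : ∀ i, 0 < p i)
    (hHolder : ∑ j : Fin m, 1 / p j.succ = 1 / p 0) :
    strongConstO μ T P O p ≤
      strongConstO (Measure.count : Measure (Fin d → ℤ)) (canShift d) P O p :=
  calderon_transference_strong_general μ d m k T hTmp hTsm hTcomm P O OK hOKm hO1 hO2 p hp hHolder
end
end

section
/- For each p ∈ [1, ∞], the best constants for the one-sided, centered, and uncentered ergodic maximal operators on any nontrivial σ-finite system are dominated by the corresponding constants on the integers: C⁻(X, p) ≤ C⁻(X₁, p), C^c(X, p) ≤ C^c(X₁, p), and C^u(X, p) ≤ C^u(X₁, p). -/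
open MeasureTheory ENNReal Filter

noncomputable section

variable {X : Type*} [MeasurableSpace X]

/-- The one-sided ergodic maximal operator `M⁻f(x) = sup_N |(1/(N+1)) Σ_{n=0}^N f(Tⁿx)|`. -/
def maxOS (T : Equiv.Perm X) (f : X → ℝ) (x : X) : ℝ≥0∞ :=
  ⨆ N : ℕ,
    (‖(∑ n ∈ Finset.range (N + 1), f ((T ^ n) x)) / ((N : ℝ) + 1)‖₊ : ℝ≥0∞)

/-- The centered ergodic maximal operator `M^c f(x) = sup_N |(1/(2N+1)) Σ_{n=-N}^N f(Tⁿx)|`. -/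
def maxC (T : Equiv.Perm X) (f : X → ℝ) (x : X) : ℝ≥0∞ :=
  ⨆ N : ℕ,
    (‖(∑ n ∈ Finset.Icc (-(N : ℤ)) (N : ℤ), f ((T ^ n) x)) / (2 * (N : ℝ) + 1)‖₊ : ℝ≥0∞)

/-- The uncentered ergodic maximal operator
`M^u f(x) = sup_{r,s ≥ 0} |(1/(r+s+1)) Σ_{n=-r}^{s} f(Tⁿx)|`. -/
def maxU (T : Equiv.Perm X) (f : X → ℝ) (x : X) : ℝ≥0∞ :=
  ⨆ r : ℕ, ⨆ s : ℕ,
    (‖(∑ n ∈ Finset.Icc (-(r : ℤ)) (s : ℤ), f ((T ^ n) x)) / ((r : ℝ) + (s : ℝ) + 1)‖₊ : ℝ≥0∞)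

/-- The best constant in the weak type (1,1) inequality for a maximal operator `M`:
the smallest `C` with `λ · μ({x : M f(x) ≥ λ}) ≤ C ‖f‖₁` for all `f ∈ L¹(μ)` and all `λ`. -/
def weakConst (μ : Measure X) (M : (X → ℝ) → X → ℝ≥0∞) : ℝ≥0∞ :=
  sInf {C | ∀ f : X → ℝ, Integrable f μ →
    ∀ l : ℝ≥0∞, l * μ {x | l ≤ M f x} ≤ C * eLpNorm f 1 μ}

/-- The best constant in the strong type (p,p) inequality for a maximal operator `M`:
the smallest `C` with `‖M f‖_p ≤ C ‖f‖_p` for all `f ∈ L^p(μ)`. -/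
def strongConst (μ : Measure X) (M : (X → ℝ) → X → ℝ≥0∞) (p : ℝ) : ℝ≥0∞ :=
  sInf {C | ∀ f : X → ℝ, MemLp f (ENNReal.ofReal p) μ →
    (∫⁻ x, M f x ^ p ∂μ) ^ (1 / p) ≤ C * eLpNorm f (ENNReal.ofReal p) μ}

/-- The best constant in the `L^∞` inequality for a maximal operator `M`. -/
def supConst (μ : Measure X) (M : (X → ℝ) → X → ℝ≥0∞) : ℝ≥0∞ :=
  sInf {C | ∀ f : X → ℝ, MemLp f ∞ μ → essSup (M f) μ ≤ C * eLpNorm f ∞ μ}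

/-- The best constant `C_M(X, p)` for `p ∈ [1,∞]`: the weak type (1,1) constant for `p = 1`,
the `L^∞` constant for `p = ∞`, and the strong type (p,p) constant for `p ∈ (1,∞)`. -/
def bestConst (μ : Measure X) (M : (X → ℝ) → X → ℝ≥0∞) (p : ℝ≥0∞) : ℝ≥0∞ :=
  if p = 1 then weakConst μ M
  else if p = ∞ then supConst μ M
  else strongConst μ M p.toReal

/-- The shift `l ↦ l + 1` on `ℤ`, the transformation of the canonical system `X₁`. -/
def shiftZ : Equiv.Perm ℤ := Equiv.addRight 1

/-- Ergodicity of an invertible transformation: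
`T⁻¹(E) = E` implies `μ(E) = 0` or `μ(X \ E) = 0`. -/
def IsErgodicPerm (μ : Measure X) (T : Equiv.Perm X) : Prop :=
  ∀ E : Set X, MeasurableSet E → (⇑T) ⁻¹' E = E → μ E = 0 ∨ μ Eᶜ = 0

/-- Nontriviality of a measure space: there is a set of strictly positive finite measure. -/
def NontrivialSpace (μ : Measure X) : Prop :=
  ∃ E : Set X, MeasurableSet E ∧ 0 < μ E ∧ μ E < ∞

/-- `X` consists of finitely many atoms: it splits into disjoint measurable sets
`X₀, X₁, …, X_L` with `μ(X₀) = 0`, `T(X_l) ⊆ X_{l+1}` for `1 ≤ l ≤ L-1`, `T(X_L) ⊆ X₁`, and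
no `X_l`, `1 ≤ l ≤ L`, splits into two disjoint measurable sets of nonzero measure. -/
def FinitelyManyAtoms (μ : Measure X) (T : Equiv.Perm X) : Prop :=
  ∃ (L : ℕ) (A : ℕ → Set X), 0 < L ∧
    (∀ l, l ≤ L → MeasurableSet (A l)) ∧
    (∀ l l', l ≤ L → l' ≤ L → l ≠ l' → Disjoint (A l) (A l')) ∧
    (⋃ l ≤ L, A l) = Set.univ ∧
    μ (A 0) = 0 ∧
    (∀ l, 1 ≤ l → l ≤ L - 1 → ⇑T '' A l ⊆ A (l + 1)) ∧
    (⇑T '' A L ⊆ A 1) ∧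
    (∀ l, 1 ≤ l → l ≤ L → ∀ S : Set X, MeasurableSet S → S ⊆ A l →
      μ S = 0 ∨ μ (A l \ S) = 0)

/-- The Rokhlin condition (case (B) of the Kakutani–Rokhlin lemma): for each `L ∈ ℕ` there is
a set `E_L` of strictly positive finite measure with `T^{-l}(E_L)`, `l ∈ [L]`, disjoint. -/
def RokhlinCondition (μ : Measure X) (T : Equiv.Perm X) : Prop :=
  ∀ L : ℕ, 0 < L → ∃ E : Set X, MeasurableSet E ∧ 0 < μ E ∧ μ E < ∞ ∧
    ∀ l l' : ℕ, 1 ≤ l → l ≤ L → 1 ≤ l' → l' ≤ L → l ≠ l' →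
      Disjoint ((⇑(T ^ l)) ⁻¹' E) ((⇑(T ^ l')) ⁻¹' E)

/-! Calderón transference. Fix a truncation level `J`. Along the orbit of `x`, the maximal
averages over windows inside `[-J, J]` at the points `Tᵐx`, `0 ≤ m ≤ K`, only see the values
`f(Tⁿx)` for `-J ≤ n ≤ K + J`, so they are maximal averages on `ℤ` of a finitely supported
function. Apply the inequality on `ℤ` to it, sum over `m` and integrate over `x`: since `T`
preserves `μ`, this gives the inequality on `X` for the truncated operator with the loss factor
`(K + 1 + 2J) / (K + 1)`, which tends to `1` as `K → ∞`. Monotone convergence removes the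
truncation. In the `L^∞` case the bound `M f ≤ ‖f‖_∞` is direct, and every constant admissible
on `ℤ` is at least `1` (test it on a Dirac mass). -/

section

variable {α : Type*}

lemma LowerSemicontinuous.le_iSup_of_monotone {β γ : Type*} [CompleteLinearOrder β]
    [TopologicalSpace β] [OrderTopology β] [CompleteLinearOrder γ] {φ : β → γ}
    (hφ : LowerSemicontinuous φ) {a : ℕ → β} (ha : Monotone a) :
    φ (⨆ J, a J) ≤ ⨆ J, φ (a J) := by
  refine le_of_forall_lt fun y hy => ?_
  obtain ⟨J, hJ⟩ := ((tendsto_atTop_iSup ha).eventually (hφ _ y hy)).exists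
  exact hJ.trans_le (le_iSup (fun J => φ (a J)) J)

lemma ENNReal.le_of_forall_succ_mul_le {a b : ℝ≥0∞} (N : ℕ)
    (h : ∀ K : ℕ, ((K : ℝ≥0∞) + 1) * a ≤ ((K : ℝ≥0∞) + 1 + N) * b) : a ≤ b := by
  refine ENNReal.le_of_forall_pos_le_add fun ε hε hb => ?_
  obtain ⟨K, hK⟩ := ENNReal.exists_nat_mul_gt (ENNReal.coe_ne_zero.2 hε.ne')
    (ENNReal.mul_ne_top (ENNReal.natCast_ne_top N) hb.ne)
  have hK0 : (K : ℝ≥0∞) + 1 ≠ 0 := by positivity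
  refine (ENNReal.mul_le_mul_iff_right hK0 (by simp)).1 ?_
  calc ((K : ℝ≥0∞) + 1) * a ≤ ((K : ℝ≥0∞) + 1) * b + N * b := by rw [← add_mul]; exact h K
    _ ≤ ((K : ℝ≥0∞) + 1) * b + ((K : ℝ≥0∞) + 1) * ε :=
        add_le_add le_rfl (hK.le.trans (mul_le_mul_left le_self_add _))
    _ = ((K : ℝ≥0∞) + 1) * (b + ε) := (mul_add _ _ _).symm

lemma ENNReal.rpow_one_div_le_mul_rpow_one_div_iff {q : ℝ} (hq : 0 < q) {A B C : ℝ≥0∞} :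
    A ^ (1 / q) ≤ C * B ^ (1 / q) ↔ A ≤ C ^ q * B := by
  rw [one_div, ENNReal.rpow_inv_le_iff hq, ENNReal.mul_rpow_of_nonneg _ _ hq.le,
    ← ENNReal.rpow_mul, inv_mul_cancel₀ hq.ne', ENNReal.rpow_one]

lemma eLpNorm_ofReal_eq_lintegral [MeasurableSpace α] {μ : Measure α} {q : ℝ}
    (hq : 0 < q) (f : α → ℝ) :
    eLpNorm f (ENNReal.ofReal q) μ = (∫⁻ x, ‖f x‖ₑ ^ q ∂μ) ^ (1 / q) := by
  rw [eLpNorm_eq_lintegral_rpow_enorm_toReal (by simpa using hq) ENNReal.ofReal_ne_top,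
    ENNReal.toReal_ofReal hq.le]

lemma memLp_count_of_hasFiniteSupport {g : ℤ → ℝ} (hg : g.HasFiniteSupport) (p : ℝ≥0∞) :
    MemLp g p Measure.count := by
  rw [← Set.indicator_support (f := g), memLp_indicator_iff_restrict hg.measurableSet]
  have : IsFiniteMeasure (Measure.count.restrict g.support) :=
    isFiniteMeasure_restrict.2 (Measure.count_apply_lt_top.2 hg).ne
  obtain ⟨C, hC⟩ := (hg.image (‖g ·‖)).bddAbove
  exact MemLp.of_bound (measurable_of_countable g).aestronglyMeasurable C
    (ae_restrict_of_forall_mem hg.measurableSet fun n hn => hC ⟨n, hn, rfl⟩)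

lemma shiftZ_zpow_apply (n m : ℤ) : (shiftZ ^ n) m = m + n := by
  simp [shiftZ]

lemma Equiv.Perm.measurePreserving_zpow [MeasurableSpace α] {μ : Measure α} {T : Equiv.Perm α}
    (hT : MeasurePreserving T μ μ) (hTs : Measurable T.symm) :
    ∀ n : ℤ, MeasurePreserving ⇑(T ^ n) μ μ
  | Int.ofNat n => by simpa [Equiv.Perm.coe_pow] using hT.iterate n
  | Int.negSucc n => by
    simpa [Equiv.Perm.coe_pow, ← inv_pow] using
      (MeasurePreserving.symm ⟨T, hT.measurable, hTs⟩ hT).iterate (n + 1)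

lemma ae_forall_zpow [MeasurableSpace α] {μ : Measure α} {T : Equiv.Perm α}
    (hT : ∀ n : ℤ, MeasurePreserving ⇑(T ^ n) μ μ) {P : α → Prop} (hP : ∀ᵐ x ∂μ, P x) :
    ∀ᵐ x ∂μ, ∀ n : ℤ, P ((T ^ n) x) :=
  ae_all_iff.2 fun n => (hT n).quasiMeasurePreserving.ae hP

lemma lintegral_sum_comp_zpow [MeasurableSpace α] {μ : Measure α} {T : Equiv.Perm α}
    (hT : ∀ n : ℤ, MeasurePreserving ⇑(T ^ n) μ μ) {h : α → ℝ≥0∞} (hh : Measurable h)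
    (s : Finset ℤ) : ∫⁻ x, ∑ n ∈ s, h ((T ^ n) x) ∂μ = s.card * ∫⁻ x, h x ∂μ := by
  rw [lintegral_finsetSum (f := fun n x => h ((T ^ n) x)) _
    fun n _ => hh.comp (hT n).measurable, ← nsmul_eq_mul, ← Finset.sum_const]
  exact Finset.sum_congr rfl fun n _ => (hT n).lintegral_comp hh

lemma Finset.exists_subset_Icc_neg_self (s : Finset ℤ) : ∃ J : ℕ, s ⊆ Finset.Icc (-(J : ℤ)) J :=
  ⟨s.sup Int.natAbs, fun n hn => by
    have := Finset.le_sup (f := Int.natAbs) hn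
    rw [Finset.mem_Icc]; omega⟩

/-- The two axioms are what the `L^∞` case needs: every average is bounded by `‖f‖_∞`, and on `ℤ`
the maximal function of a Dirac mass is at least `1` at its support. -/
structure WindowFamily (ι : Type*) where
  window : ι → Finset ℤ
  weight : ι → ℝ
  card_le_weight : ∀ i, ((window i).card : ℝ) ≤ weight i
  exists_window_eq_singleton : ∃ i, window i = {0} ∧ weight i = 1

namespace WindowFamily

variable {ι : Type*} (F : WindowFamily ι)

def average (T : Equiv.Perm α) (f : α → ℝ) (i : ι) (x : α) : ℝ :=
  (∑ n ∈ F.window i, f ((T ^ n) x)) / F.weight i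

def maximal (T : Equiv.Perm α) (f : α → ℝ) (x : α) : ℝ≥0∞ :=
  ⨆ i, (‖F.average T f i x‖₊ : ℝ≥0∞)

def truncMaximal (J : ℕ) (T : Equiv.Perm α) (f : α → ℝ) (x : α) : ℝ≥0∞ :=
  ⨆ i, ⨆ (_ : F.window i ⊆ Finset.Icc (-(J : ℤ)) J), (‖F.average T f i x‖₊ : ℝ≥0∞)

lemma truncMaximal_le_maximal (J : ℕ) (T : Equiv.Perm α) (f : α → ℝ) (x : α) :
    F.truncMaximal J T f x ≤ F.maximal T f x :=
  iSup_mono fun _ => iSup_le fun _ => le_rfl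

lemma monotone_truncMaximal (T : Equiv.Perm α) (f : α → ℝ) (x : α) :
    Monotone fun J => F.truncMaximal J T f x := fun _ _ hJ =>
  iSup_mono fun _ => iSup_mono' fun hi =>
    ⟨hi.trans (Finset.Icc_subset_Icc (by omega) (by omega)), le_rfl⟩

lemma iSup_truncMaximal (T : Equiv.Perm α) (f : α → ℝ) (x : α) :
    ⨆ J, F.truncMaximal J T f x = F.maximal T f x := by
  refine le_antisymm (iSup_le fun J => F.truncMaximal_le_maximal J T f x) (iSup_le fun i => ?_)
  obtain ⟨J, hJ⟩ := (F.window i).exists_subset_Icc_neg_self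
  exact le_iSup_of_le J (le_iSup₂_of_le i hJ le_rfl)

lemma measurable_average [MeasurableSpace α] {T : Equiv.Perm α}
    (hT : ∀ n : ℤ, Measurable ⇑(T ^ n)) {f : α → ℝ} (hf : Measurable f) (i : ι) :
    Measurable (F.average T f i) :=
  (Finset.measurable_sum _ fun n _ => hf.comp (hT n)).div_const _

lemma measurable_maximal [MeasurableSpace α] [Countable ι] {T : Equiv.Perm α}
    (hT : ∀ n : ℤ, Measurable ⇑(T ^ n)) {f : α → ℝ} (hf : Measurable f) :
    Measurable (F.maximal T f) :=
  .iSup fun i => (F.measurable_average hT hf i).nnnorm.coe_nnreal_ennreal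

lemma measurable_truncMaximal [MeasurableSpace α] [Countable ι] {T : Equiv.Perm α}
    (hT : ∀ n : ℤ, Measurable ⇑(T ^ n)) {f : α → ℝ} (hf : Measurable f) (J : ℕ) :
    Measurable (F.truncMaximal J T f) :=
  .iSup fun i => .iSup fun _ => (F.measurable_average hT hf i).nnnorm.coe_nnreal_ennreal

lemma maximal_ae_congr [MeasurableSpace α] {μ : Measure α} {T : Equiv.Perm α}
    (hT : ∀ n : ℤ, MeasurePreserving ⇑(T ^ n) μ μ) {f g : α → ℝ} (hfg : f =ᵐ[μ] g) :
    F.maximal T f =ᵐ[μ] F.maximal T g :=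
  (ae_forall_zpow hT hfg).mono fun x hx => by simp only [maximal, average, hx]

lemma truncMaximal_zpow_apply {J : ℕ} {T : Equiv.Perm α} {f : α → ℝ} {x : α} {m : ℤ}
    {g : ℤ → ℝ} (hg : ∀ n ∈ Finset.Icc (m - J) (m + J), g n = f ((T ^ n) x)) :
    F.truncMaximal J T f ((T ^ m) x) = F.truncMaximal J shiftZ g m := by
  refine iSup_congr fun i => iSup_congr fun hi => ?_
  simp only [average]
  congr 3
  refine Finset.sum_congr rfl fun n hn => ?_
  have hn' := Finset.mem_Icc.1 (hi hn)
  rw [shiftZ_zpow_apply, hg _ (Finset.mem_Icc.2 ⟨by omega, by omega⟩), ← Equiv.Perm.mul_apply,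
    ← zpow_add, add_comm]

section Transference

variable {φ : ℝ≥0∞ → ℝ≥0∞} {ψ : ℝ → ℝ≥0∞}

lemma sum_comp_truncMaximal_orbit_le (hφ : Monotone φ) (hψ : ψ 0 = 0)
    (hZ : ∀ g : ℤ → ℝ, g.HasFiniteSupport →
      ∑' m, φ (F.maximal shiftZ g m) ≤ ∑' n, ψ (g n))
    (J K : ℕ) (T : Equiv.Perm α) (f : α → ℝ) (x : α) :
    ∑ m ∈ Finset.Icc (0 : ℤ) K, φ (F.truncMaximal J T f ((T ^ m) x)) ≤
      ∑ n ∈ Finset.Icc (-(J : ℤ)) (K + J), ψ (f ((T ^ n) x)) := by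
  set R := Finset.Icc (-(J : ℤ)) (K + J)
  set g : ℤ → ℝ := fun n => if n ∈ R then f ((T ^ n) x) else 0
  have hg : g.HasFiniteSupport :=
    R.finite_toSet.subset fun n hn => by by_contra h; exact hn (if_neg h)
  calc ∑ m ∈ Finset.Icc (0 : ℤ) K, φ (F.truncMaximal J T f ((T ^ m) x))
      = ∑ m ∈ Finset.Icc (0 : ℤ) K, φ (F.truncMaximal J shiftZ g m) := by
        refine Finset.sum_congr rfl fun m hm => ?_
        have hm' := Finset.mem_Icc.1 hm
        rw [F.truncMaximal_zpow_apply fun n hn => if_pos ?_]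
        have hn' := Finset.mem_Icc.1 hn
        exact Finset.mem_Icc.2 ⟨by omega, by omega⟩
    _ ≤ ∑ m ∈ Finset.Icc (0 : ℤ) K, φ (F.maximal shiftZ g m) :=
        Finset.sum_le_sum fun m _ => hφ (F.truncMaximal_le_maximal J shiftZ g m)
    _ ≤ ∑' m, φ (F.maximal shiftZ g m) := ENNReal.sum_le_tsum _
    _ ≤ ∑' n, ψ (g n) := hZ g hg
    _ = ∑ n ∈ R, ψ (f ((T ^ n) x)) := by
        rw [tsum_eq_sum (s := R) fun n hn => by simp [g, hn, hψ]]
        exact Finset.sum_congr rfl fun n hn => by simp [g, hn]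

variable [MeasurableSpace α] [Countable ι] {μ : Measure α} {T : Equiv.Perm α}

lemma lintegral_comp_truncMaximal_le (hT : ∀ n : ℤ, MeasurePreserving ⇑(T ^ n) μ μ)
    (hφ : Monotone φ) (hφm : Measurable φ) (hψm : Measurable ψ) (hψ : ψ 0 = 0)
    (hZ : ∀ g : ℤ → ℝ, g.HasFiniteSupport →
      ∑' m, φ (F.maximal shiftZ g m) ≤ ∑' n, ψ (g n))
    {f : α → ℝ} (hf : Measurable f) (J : ℕ) :
    ∫⁻ x, φ (F.truncMaximal J T f x) ∂μ ≤ ∫⁻ x, ψ (f x) ∂μ := by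
  refine ENNReal.le_of_forall_succ_mul_le (2 * J) fun K => ?_
  have hcard_left : (Finset.Icc (0 : ℤ) K).card = K + 1 := by simp
  have hcard_right : (Finset.Icc (-(J : ℤ)) (K + J)).card = K + 1 + 2 * J := by simp; omega
  calc ((K : ℝ≥0∞) + 1) * ∫⁻ x, φ (F.truncMaximal J T f x) ∂μ
      = ∫⁻ x, ∑ m ∈ Finset.Icc (0 : ℤ) K, φ (F.truncMaximal J T f ((T ^ m) x)) ∂μ := by
        rw [lintegral_sum_comp_zpow hT (h := fun y => φ (F.truncMaximal J T f y))
          (hφm.comp (F.measurable_truncMaximal (fun n => (hT n).measurable) hf J)), hcard_left]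
        push_cast; rfl
    _ ≤ ∫⁻ x, ∑ n ∈ Finset.Icc (-(J : ℤ)) (K + J), ψ (f ((T ^ n) x)) ∂μ :=
        lintegral_mono fun x => F.sum_comp_truncMaximal_orbit_le hφ hψ hZ J K T f x
    _ = ((K : ℝ≥0∞) + 1 + (2 * J : ℕ)) * ∫⁻ x, ψ (f x) ∂μ := by
        rw [lintegral_sum_comp_zpow hT (h := fun y => ψ (f y)) (hψm.comp hf), hcard_right]
        push_cast; rfl

theorem lintegral_comp_maximal_le (hT : ∀ n : ℤ, MeasurePreserving ⇑(T ^ n) μ μ)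
    (hφ : Monotone φ) (hφc : LowerSemicontinuous φ) (hψm : Measurable ψ) (hψ : ψ 0 = 0)
    (hZ : ∀ g : ℤ → ℝ, g.HasFiniteSupport →
      ∑' m, φ (F.maximal shiftZ g m) ≤ ∑' n, ψ (g n))
    {f : α → ℝ} (hf : Measurable f) :
    ∫⁻ x, φ (F.maximal T f x) ∂μ ≤ ∫⁻ x, ψ (f x) ∂μ :=
  calc ∫⁻ x, φ (F.maximal T f x) ∂μ ≤ ∫⁻ x, ⨆ J, φ (F.truncMaximal J T f x) ∂μ :=
        lintegral_mono fun x => by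
          rw [← F.iSup_truncMaximal]
          exact hφc.le_iSup_of_monotone (F.monotone_truncMaximal T f x)
    _ = ⨆ J, ∫⁻ x, φ (F.truncMaximal J T f x) ∂μ :=
        lintegral_iSup (fun J => hφc.measurable.comp
          (F.measurable_truncMaximal (fun n => (hT n).measurable) hf J))
          fun _ _ hJ x => hφ (F.monotone_truncMaximal T f x hJ)
    _ ≤ ∫⁻ x, ψ (f x) ∂μ :=
        iSup_le (F.lintegral_comp_truncMaximal_le hT hφ hφc.measurable hψm hψ hZ hf)

end Transference

lemma maximal_le_of_forall_le {T : Equiv.Perm α} {f : α → ℝ} {x : α} {a : ℝ≥0∞}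
    (h : ∀ n : ℤ, ‖f ((T ^ n) x)‖ₑ ≤ a) : F.maximal T f x ≤ a := by
  rcases eq_top_or_lt_top a with rfl | ha
  · exact le_top
  lift a to NNReal using ha.ne
  refine iSup_le fun i => ENNReal.coe_le_coe.2 ?_
  have hw : 0 ≤ F.weight i := (Nat.cast_nonneg _).trans (F.card_le_weight i)
  rw [← NNReal.coe_le_coe, coe_nnnorm, average, norm_div, Real.norm_of_nonneg hw]
  refine div_le_of_le_mul₀ hw a.2 ?_
  calc ‖∑ n ∈ F.window i, f ((T ^ n) x)‖ ≤ ∑ n ∈ F.window i, ‖f ((T ^ n) x)‖ := norm_sum_le _ _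
    _ ≤ ∑ n ∈ F.window i, (a : ℝ) :=
        Finset.sum_le_sum fun n _ => by exact_mod_cast enorm_le_coe.1 (h n)
    _ = (F.window i).card * a := by simp
    _ ≤ a * F.weight i := by rw [mul_comm]; gcongr; exact F.card_le_weight i

lemma one_le_of_essSup_maximal_le {C : ℝ≥0∞}
    (hC : ∀ g : ℤ → ℝ, MemLp g ∞ Measure.count →
      essSup (F.maximal shiftZ g) Measure.count ≤ C * eLpNorm g ∞ Measure.count) :
    1 ≤ C := by
  obtain ⟨i, hi, hw⟩ := F.exists_window_eq_singleton
  set g : ℤ → ℝ := Pi.single 0 1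
  have hg : g.HasFiniteSupport := (Set.finite_singleton 0).subset Pi.support_single_subset
  calc 1 ≤ F.maximal shiftZ g 0 :=
        le_iSup_of_le i (by simp [average, hi, hw, g, shiftZ_zpow_apply])
    _ ≤ essSup (F.maximal shiftZ g) Measure.count := by rw [essSup_count]; exact le_iSup _ 0
    _ ≤ C * eLpNorm g ∞ Measure.count := hC g (memLp_count_of_hasFiniteSupport hg ∞)
    _ ≤ C := by
        rw [eLpNorm_exponent_top, eLpNormEssSup_count]
        refine mul_le_of_le_one_right' (iSup_le fun n => ?_)
        by_cases hn : n = 0 <;> simp [g, hn]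

section Constants

variable [MeasurableSpace α] {μ : Measure α} {T : Equiv.Perm α}

theorem weakConst_maximal_le [Countable ι] (hT : ∀ n : ℤ, MeasurePreserving ⇑(T ^ n) μ μ) :
    weakConst μ (F.maximal T) ≤ weakConst Measure.count (F.maximal shiftZ) := by
  refine sInf_le_sInf fun C hC f hf l => ?_
  obtain ⟨f', hf', hff'⟩ := hf.aemeasurable
  have hlevel : {x | l ≤ F.maximal T f x} =ᵐ[μ] {x | l ≤ F.maximal T f' x} :=
    (F.maximal_ae_congr hT hff').fun_comp (l ≤ ·)
  rw [measure_congr hlevel, eLpNorm_congr_ae hff']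
  -- Strict level sets `{a < M f}` survive the limit in the truncation (lower semicontinuity);
  -- the non-strict one is recovered by letting `a ↑ l`.
  refine ENNReal.mul_le_of_forall_lt fun a ha b hb => ?_
  have hmono : Monotone ((Set.Ioi a).indicator fun _ => a) := fun s t hst => by
    by_cases hs : a < s
    · simp [hs, hs.trans_le hst]
    · simp [hs]
  have hZ : ∀ g : ℤ → ℝ, g.HasFiniteSupport →
      ∑' m, (Set.Ioi a).indicator (fun _ => a) (F.maximal shiftZ g m) ≤ ∑' n, C * ‖g n‖ₑ := by
    intro g hg
    calc ∑' m, (Set.Ioi a).indicator (fun _ => a) (F.maximal shiftZ g m)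
        = a * Measure.count {m | a < F.maximal shiftZ g m} := by
          rw [← lintegral_count, lintegral_indicator_const_comp (measurable_of_countable _)
            measurableSet_Ioi]
          rfl
      _ ≤ a * Measure.count {m | a ≤ F.maximal shiftZ g m} :=
          mul_le_mul_right (measure_mono (Set.ofPred_subset_ofPred.2 fun _ => le_of_lt)) a
      _ ≤ C * eLpNorm g 1 Measure.count :=
          hC g (memLp_one_iff_integrable.1 (memLp_count_of_hasFiniteSupport hg 1)) a
      _ = ∑' n, C * ‖g n‖ₑ := by
          rw [eLpNorm_one_eq_lintegral_enorm, lintegral_count, ENNReal.tsum_mul_left]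
  calc a * b ≤ a * μ {x | a < F.maximal T f' x} :=
        mul_le_mul_right (hb.le.trans (measure_mono fun x hx => ha.trans_le hx)) a
    _ = ∫⁻ x, (Set.Ioi a).indicator (fun _ => a) (F.maximal T f' x) ∂μ :=
        (lintegral_indicator_const_comp (F.measurable_maximal (fun n => (hT n).measurable) hf')
          measurableSet_Ioi a).symm
    _ ≤ ∫⁻ x, C * ‖f' x‖ₑ ∂μ :=
        F.lintegral_comp_maximal_le hT hmono (isOpen_Ioi.lowerSemicontinuous_indicator bot_le)
          (measurable_enorm.const_mul C) (by simp) hZ hf'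
    _ = C * eLpNorm f' 1 μ := by
        rw [lintegral_const_mul _ hf'.enorm, eLpNorm_one_eq_lintegral_enorm]

theorem strongConst_maximal_le [Countable ι] (hT : ∀ n : ℤ, MeasurePreserving ⇑(T ^ n) μ μ)
    {q : ℝ} (hq : 0 < q) :
    strongConst μ (F.maximal T) q ≤ strongConst Measure.count (F.maximal shiftZ) q := by
  refine sInf_le_sInf fun C hC f hf => ?_
  obtain ⟨f', hf', hff'⟩ := hf.aestronglyMeasurable.aemeasurable
  rw [lintegral_congr_ae ((F.maximal_ae_congr hT hff').mono fun x hx => by rw [hx]),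
    eLpNorm_congr_ae hff', eLpNorm_ofReal_eq_lintegral hq,
    ENNReal.rpow_one_div_le_mul_rpow_one_div_iff hq, ← lintegral_const_mul _ (hf'.enorm.pow_const q)]
  refine F.lintegral_comp_maximal_le hT (fun _ _ h => ENNReal.rpow_le_rpow h hq.le)
    (ENNReal.continuous_rpow_const.lowerSemicontinuous)
    ((measurable_enorm.pow_const q).const_mul _) (by simp [hq]) (fun g hg => ?_) hf'
  have := hC g (memLp_count_of_hasFiniteSupport hg _)
  rwa [eLpNorm_ofReal_eq_lintegral hq, ENNReal.rpow_one_div_le_mul_rpow_one_div_iff hq,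
    lintegral_count, lintegral_count, ← ENNReal.tsum_mul_left] at this

theorem supConst_maximal_le (hT : ∀ n : ℤ, MeasurePreserving ⇑(T ^ n) μ μ) :
    supConst μ (F.maximal T) ≤ supConst Measure.count (F.maximal shiftZ) := by
  refine sInf_le_sInf fun C hC f _ => ?_
  calc essSup (F.maximal T f) μ ≤ eLpNorm f ∞ μ :=
        essSup_le_of_ae_le _ ((ae_forall_zpow hT (enorm_ae_le_eLpNormEssSup f μ)).mono
          fun x hx => F.maximal_le_of_forall_le hx)
    _ ≤ C * eLpNorm f ∞ μ := le_mul_of_one_le_left' (F.one_le_of_essSup_maximal_le hC)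

theorem bestConst_maximal_le [Countable ι] (hT : ∀ n : ℤ, MeasurePreserving ⇑(T ^ n) μ μ)
    {p : ℝ≥0∞} (hp : 1 ≤ p) :
    bestConst μ (F.maximal T) p ≤ bestConst Measure.count (F.maximal shiftZ) p := by
  unfold bestConst
  split_ifs with _ htop
  · exact F.weakConst_maximal_le hT
  · exact F.supConst_maximal_le hT
  · exact F.strongConst_maximal_le hT (ENNReal.toReal_pos (zero_lt_one.trans_le hp).ne' htop)

end Constants

def oneSided : WindowFamily ℕ where
  window N := (Finset.range (N + 1)).map Nat.castEmbedding
  weight N := N + 1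
  card_le_weight N := by simp
  exists_window_eq_singleton := ⟨0, by simp, by simp⟩

def centered : WindowFamily ℕ where
  window N := Finset.Icc (-(N : ℤ)) N
  weight N := 2 * N + 1
  card_le_weight N := by
    have : (Finset.Icc (-(N : ℤ)) N).card = 2 * N + 1 := by simp; omega
    simp [this]
  exists_window_eq_singleton := ⟨0, by simp, by simp⟩

def uncentered : WindowFamily (ℕ × ℕ) where
  window r := Finset.Icc (-(r.1 : ℤ)) r.2
  weight r := r.1 + r.2 + 1
  card_le_weight r := by
    have : (Finset.Icc (-(r.1 : ℤ)) r.2).card = r.1 + r.2 + 1 := by simp; omega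
    simp [this]
  exists_window_eq_singleton := ⟨(0, 0), by simp, by simp⟩

end WindowFamily

lemma maxOS_eq_maximal_oneSided (T : Equiv.Perm α) : maxOS T = WindowFamily.oneSided.maximal T := by
  ext f x
  simp [maxOS, WindowFamily.maximal, WindowFamily.average, WindowFamily.oneSided]

lemma maxC_eq_maximal_centered (T : Equiv.Perm α) : maxC T = WindowFamily.centered.maximal T := rfl

lemma maxU_eq_maximal_uncentered (T : Equiv.Perm α) : maxU T = WindowFamily.uncentered.maximal T := by
  ext f x
  rw [WindowFamily.maximal, iSup_prod]
  rfl

end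

theorem maximal_transference_general {X : Type*} [MeasurableSpace X] (μ : Measure X)
    (T : Equiv.Perm X)
    (hT : MeasurePreserving (⇑T) μ μ) (hTs : Measurable (⇑T.symm))
    (p : ℝ≥0∞) (hp : 1 ≤ p) :
    bestConst μ (maxOS T) p ≤ bestConst (Measure.count : Measure ℤ) (maxOS shiftZ) p ∧
    bestConst μ (maxC T) p ≤ bestConst (Measure.count : Measure ℤ) (maxC shiftZ) p ∧
    bestConst μ (maxU T) p ≤ bestConst (Measure.count : Measure ℤ) (maxU shiftZ) p := by
  have hTn := T.measurePreserving_zpow hT hTs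
  rw [maxOS_eq_maximal_oneSided, maxOS_eq_maximal_oneSided, maxC_eq_maximal_centered,
    maxC_eq_maximal_centered, maxU_eq_maximal_uncentered, maxU_eq_maximal_uncentered]
  exact ⟨WindowFamily.oneSided.bestConst_maximal_le hTn hp,
    WindowFamily.centered.bestConst_maximal_le hTn hp,
    WindowFamily.uncentered.bestConst_maximal_le hTn hp⟩

/-- Proposition 2 of the paper (transference for the three maximal operators):
for every `p ∈ [1,∞]`, the best constants on any nontrivial σ-finite system with an invertible
bimeasurable measure-preserving transformation are dominated by those on the canonical
system `X₁ = ℤ`. -/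
theorem maximal_transference {X : Type*} [MeasurableSpace X] (μ : Measure X) [SigmaFinite μ]
    (hX : NontrivialSpace μ) (T : Equiv.Perm X)
    (hT : MeasurePreserving (⇑T) μ μ) (hTs : Measurable (⇑T.symm))
    (p : ℝ≥0∞) (hp : 1 ≤ p) :
    bestConst μ (maxOS T) p ≤ bestConst (Measure.count : Measure ℤ) (maxOS shiftZ) p ∧
    bestConst μ (maxC T) p ≤ bestConst (Measure.count : Measure ℤ) (maxC shiftZ) p ∧
    bestConst μ (maxU T) p ≤ bestConst (Measure.count : Measure ℤ) (maxU shiftZ) p :=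
  maximal_transference_general μ T hT hTs p hp

end
end

section
/- The best constant in the weak type (1,1) inequality for the one-sided maximal operator on the integers equals 1: C⁻(X₁, 1) = 1. In particular, for every f ∈ ℓ¹(ℤ) and every λ > 0, one has λ · #{l ∈ ℤ : M⁻f(l) ≥ λ} ≤ ‖f‖_{ℓ¹}. -/
open MeasureTheory ENNReal Filter

/-! The upper bound is a discrete rising sun lemma. If every point of a finite set `F ⊆ ℤ`
starts an interval on which `|f|` has mean at least `c`, take the interval `[x₀, m)` of the
leftmost point: it contains at most `m - x₀` points of `F` and carries mass at least
`c (m - x₀)`, and the remaining points of `F` lie to the right of it, so by induction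
`c · #F ≤ ‖f‖₁`. Working with `c < λ` and finite subsets of the level set means the supremum
in `M⁻f` need not be attained and the level set need not be known to be finite.
The lower bound comes from testing against the indicator of a set of positive finite measure. -/

open Finset

theorem mul_card_le_sum_of_forall_exists_Ico {α : Type*} [LinearOrder α] [LocallyFiniteOrder α]
    (g : α → ℝ≥0∞) (c : ℝ≥0∞) (F T : Finset α)
    (hF : ∀ x ∈ F, ∃ m, x < m ∧ Ico x m ⊆ T ∧ c * #(Ico x m) ≤ ∑ j ∈ Ico x m, g j) :
    c * #F ≤ ∑ j ∈ T, g j := by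
  induction F using Finset.strongInduction generalizing T with
  | H F ih =>
    rcases F.eq_empty_or_nonempty with rfl | hne
    · simp
    obtain ⟨m, hm, hIT, hsum⟩ := hF _ (F.min'_mem hne)
    set x₀ := F.min' hne
    have hrest : c * #(F.filter (m ≤ ·)) ≤ ∑ j ∈ T.filter (m ≤ ·), g j := by
      refine ih _ ((filter_subset _ F).ssubset_of_not_subset fun h => ?_) _ fun x hx => ?_
      · exact absurd (mem_filter.1 (h (F.min'_mem hne))).2 (not_le.2 hm)
      · obtain ⟨hxF, hmx⟩ := mem_filter.1 hx
        obtain ⟨m', hxm', hIT', hsum'⟩ := hF x hxF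
        refine ⟨m', hxm', fun j hj => mem_filter.2 ⟨hIT' hj, hmx.trans (mem_Ico.1 hj).1⟩, hsum'⟩
    have hcard : #F ≤ #(Ico x₀ m) + #(F.filter (m ≤ ·)) := by
      refine (card_le_card fun x hx => ?_).trans (card_union_le _ _)
      by_cases hmx : m ≤ x
      · exact mem_union_right _ (mem_filter.2 ⟨hx, hmx⟩)
      · exact mem_union_left _ (mem_Ico.2 ⟨F.min'_le x hx, not_le.1 hmx⟩)
    have hdisj : Disjoint (Ico x₀ m) (T.filter (m ≤ ·)) :=
      disjoint_left.2 fun j hj hj' => not_le.2 (mem_Ico.1 hj).2 (mem_filter.1 hj').2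
    calc c * #F ≤ c * #(Ico x₀ m) + c * #(F.filter (m ≤ ·)) := by
          rw [← mul_add]; gcongr; exact_mod_cast hcard
      _ ≤ ∑ j ∈ Ico x₀ m, g j + ∑ j ∈ T.filter (m ≤ ·), g j := add_le_add hsum hrest
      _ = ∑ j ∈ Ico x₀ m ∪ T.filter (m ≤ ·), g j := (sum_union hdisj).symm
      _ ≤ ∑ j ∈ T, g j := sum_le_sum_of_subset (union_subset hIT (filter_subset _ _))

theorem MeasureTheory.Measure.exists_finset_subset_lt_card_of_lt_count {α : Type*}
    [MeasurableSpace α] [MeasurableSingletonClass α] {S : Set α} {b : ℝ≥0∞}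
    (hb : b < Measure.count S) :
    ∃ F : Finset α, ↑F ⊆ S ∧ b < #F := by
  by_cases hS : S.Finite
  · exact ⟨hS.toFinset, by simp, by rwa [Measure.count_apply_finite _ hS] at hb⟩
  · obtain ⟨n, hn⟩ := ENNReal.exists_nat_gt hb.ne_top
    obtain ⟨F, hFS, rfl⟩ := Set.Infinite.exists_subset_card_eq hS n
    exact ⟨F, hFS, hn⟩

theorem sum_range_shiftZ_pow {M : Type*} [AddCommMonoid M] (f : ℤ → M) (x : ℤ) (k : ℕ) :
    ∑ n ∈ range k, f ((shiftZ ^ n) x) = ∑ j ∈ Ico x (x + k), f j := by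
  refine sum_nbij' (fun n => x + n) (fun j => (j - x).toNat) ?_ ?_ ?_ ?_ ?_ <;>
    simp [shiftZ] <;> omega

theorem exists_Ico_mul_card_le_of_lt_maxOS {f : ℤ → ℝ} {c : ℝ≥0∞} {x : ℤ}
    (hc : c < maxOS shiftZ f x) :
    ∃ m, x < m ∧ c * #(Ico x m) ≤ ∑ j ∈ Ico x m, ‖f j‖ₑ := by
  obtain ⟨N, hN⟩ := lt_iSup_iff.1 hc
  refine ⟨x + (N + 1 : ℕ), by omega, ?_⟩
  calc c * #(Ico x (x + (N + 1 : ℕ))) = c * ‖(N : ℝ) + 1‖ₑ := by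
        rw [Int.card_Ico, add_sub_cancel_left, Int.toNat_natCast, ← Nat.cast_add_one,
          Real.enorm_natCast]
    _ ≤ ‖(∑ n ∈ range (N + 1), f ((shiftZ ^ n) x)) / ((N : ℝ) + 1)‖ₑ * ‖(N : ℝ) + 1‖ₑ := by
        gcongr; exact hN.le
    _ = ‖∑ n ∈ range (N + 1), f ((shiftZ ^ n) x)‖ₑ := by
        rw [← enorm_mul, div_mul_cancel₀ _ (by positivity)]
    _ ≤ ∑ j ∈ Ico x (x + (N + 1 : ℕ)), ‖f j‖ₑ := by
        rw [← sum_range_shiftZ_pow]; exact enorm_sum_le _ _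

theorem mul_count_maxOS_shiftZ_ge_le_eLpNorm (f : ℤ → ℝ) (l : ℝ≥0∞) :
    l * Measure.count {x | l ≤ maxOS shiftZ f x} ≤ eLpNorm f 1 Measure.count := by
  rw [eLpNorm_one_eq_lintegral_enorm, lintegral_count]
  refine ENNReal.mul_le_of_forall_lt fun c hc b hb => ?_
  obtain ⟨F, hFS, hbF⟩ := Measure.exists_finset_subset_lt_card_of_lt_count hb
  have hwit : ∀ x ∈ F, ∃ m, x < m ∧ c * #(Ico x m) ≤ ∑ j ∈ Ico x m, ‖f j‖ₑ := fun x hx =>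
    exists_Ico_mul_card_le_of_lt_maxOS (hc.trans_le (hFS hx))
  choose! w hxw hw using hwit
  calc c * b ≤ c * #F := by gcongr
    _ ≤ ∑ j ∈ F.biUnion fun x => Ico x (w x), ‖f j‖ₑ :=
      mul_card_le_sum_of_forall_exists_Ico _ c F _ fun x hx =>
        ⟨w x, hxw x hx, subset_biUnion_of_mem (fun x => Ico x (w x)) hx, hw x hx⟩
    _ ≤ ∑' j, ‖f j‖ₑ := ENNReal.sum_le_tsum _

theorem enorm_le_maxOS {X : Type*} (T : Equiv.Perm X) (f : X → ℝ) (x : X) :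
    ‖f x‖ₑ ≤ maxOS T f x :=
  le_iSup_of_le 0 (by simp)

theorem one_le_weakConst_maxOS {X : Type*} [MeasurableSpace X] {μ : Measure X}
    (hμ : NontrivialSpace μ) (T : Equiv.Perm X) : 1 ≤ weakConst μ (maxOS T) := by
  obtain ⟨E, hE, hpos, hfin⟩ := hμ
  refine le_sInf fun C hC => ?_
  have hint : Integrable (E.indicator fun _ => (1 : ℝ)) μ :=
    (integrable_indicator_iff hE).2 (integrableOn_const hfin.ne)
  have hsub : E ⊆ {x | 1 ≤ maxOS T (E.indicator fun _ => (1 : ℝ)) x} := fun x hx =>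
    le_trans (by simp [hx]) (enorm_le_maxOS T _ x)
  have hnorm : eLpNorm (E.indicator fun _ => (1 : ℝ)) 1 μ = μ E := by
    simp [eLpNorm_indicator_const hE]
  have hE_le : μ E ≤ C * μ E := (measure_mono hsub).trans (by simpa [hnorm] using hC _ hint 1)
  exact (ENNReal.mul_le_mul_iff_left hpos.ne' hfin.ne).1 (by simpa using hE_le)

/-- Lemma 1 of the paper, first part: the best constant in the weak type (1,1) inequality for
the one-sided maximal operator on the canonical system `X₁ = ℤ` equals `1`; in particular
`λ · #{l : M⁻f(l) ≥ λ} ≤ ‖f‖₁` for every `f ∈ ℓ¹(ℤ)` and every `λ > 0`. -/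
theorem oneSided_weak_const_int :
    weakConst (Measure.count : Measure ℤ) (maxOS shiftZ) = 1 ∧
    ∀ f : ℤ → ℝ, Integrable f (Measure.count : Measure ℤ) → ∀ lam : ℝ, 0 < lam →
      ENNReal.ofReal lam *
          (Measure.count : Measure ℤ) {l : ℤ | ENNReal.ofReal lam ≤ maxOS shiftZ f l} ≤
        eLpNorm f 1 (Measure.count : Measure ℤ) := by
  have hcount : NontrivialSpace (Measure.count : Measure ℤ) :=
    ⟨{0}, measurableSet_singleton 0, by simp, by simp⟩
  have hweak : weakConst (Measure.count : Measure ℤ) (maxOS shiftZ) ≤ 1 :=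
    sInf_le fun f _ l => by simpa using mul_count_maxOS_shiftZ_ge_le_eLpNorm f l
  exact ⟨le_antisymm hweak (one_le_weakConst_maxOS hcount shiftZ),
    fun f _ lam _ => mul_count_maxOS_shiftZ_ge_le_eLpNorm f _⟩
end

section
/- Let X be a nontrivial σ-finite ergodic system which consists of finitely many atoms. Then for every p ∈ (1, ∞) the best constant in the strong type (p,p) inequality for the one-sided ergodic maximal operator on X is strictly smaller than its counterpart on the integers: C⁻(X, p) < C⁻(X₁, p). -/
open MeasureTheory ENNReal Filter

noncomputable section

variable {X : Type*} [MeasurableSpace X]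

/-!
On an atomic system `T` permutes the atoms `X₁, …, X_L` cyclically, so they all have the same
measure, and an `L^p` function is a.e. constant on each of them. Hence `M⁻f` is, up to the factor
`μ(X₁)`, the one-sided maximal function of an `L`-periodic sequence, and `C⁻(X, p)^p` is at most
the corresponding best constant `R` on the cycle `ℤ/Lℤ`.

On `ℤ`, cut a periodic sequence `c ≥ 0` off to `k` periods. On all but the last period the maximal
function is at least that of `c`, while at each of the `kL` points to the left of the support the
average over the window reaching to the end of the support is at least `(Σ_{i<L} c i) / (2L)`.
This adds `k · (2L)^(-p) ‖c‖_p^p` to `‖M⁻f‖_p^p`, which beats the loss of one period once `k` is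
large, so `C⁻(ℤ, p)^p ≥ R + (2L)^(-p) / 2 > C⁻(X, p)^p`.
-/

open Finset Function

def maxAvg (a : ℕ → ℝ) : ℝ≥0∞ :=
  ⨆ N : ℕ, ‖(∑ n ∈ range (N + 1), a n) / ((N : ℝ) + 1)‖ₑ

lemma maxOS_eq_maxAvg {α : Type*} (T : Equiv.Perm α) (f : α → ℝ) (x : α) :
    maxOS T f x = maxAvg fun n => f ((T ^ n) x) := rfl

lemma shiftZ_pow_apply (n : ℕ) (j : ℤ) : (shiftZ ^ n) j = j + n := by
  induction n generalizing j with
  | zero => simp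
  | succ n ih =>
    rw [pow_succ, Equiv.Perm.mul_apply, ih]
    simp only [shiftZ, Equiv.coe_addRight]
    push_cast; ring

lemma maxOS_shiftZ (f : ℤ → ℝ) (j : ℤ) : maxOS shiftZ f j = maxAvg fun n => f (j + n) := by
  simp only [maxOS_eq_maxAvg, shiftZ_pow_apply]

lemma maxAvg_le_ofReal {a : ℕ → ℝ} {Q : ℝ} (ha : ∀ n, |a n| ≤ Q) :
    maxAvg a ≤ ENNReal.ofReal Q := by
  refine iSup_le fun N => ?_
  rw [Real.enorm_eq_ofReal_abs]
  refine ENNReal.ofReal_le_ofReal ?_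
  rw [abs_div, abs_of_pos (by positivity : (0 : ℝ) < N + 1), div_le_iff₀ (by positivity)]
  calc |∑ n ∈ range (N + 1), a n| ≤ ∑ n ∈ range (N + 1), |a n| := abs_sum_le_sum_abs _ _
    _ ≤ ∑ _n ∈ range (N + 1), Q := sum_le_sum fun n _ => ha n
    _ = Q * (N + 1) := by simp [mul_comm]

lemma maxAvg_le_maxAvg_abs (a : ℕ → ℝ) : maxAvg a ≤ maxAvg fun n => |a n| := by
  refine iSup_mono fun N => ?_
  simp only [Real.enorm_eq_ofReal_abs]
  refine ENNReal.ofReal_le_ofReal ?_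
  rw [abs_div, abs_div]
  exact div_le_div_of_nonneg_right ((abs_sum_le_sum_abs _ _).trans (le_abs_self _))
    (abs_nonneg _)

lemma Function.Periodic.sum_range_mul {M : Type*} [AddCommMonoid M] {a : ℕ → M} {L : ℕ}
    (ha : Periodic a L) (k : ℕ) : ∑ n ∈ range (k * L), a n = k • ∑ n ∈ range L, a n := by
  induction k with
  | zero => simp
  | succ k ih =>
    rw [add_mul, one_mul, sum_range_add, ih, succ_nsmul]
    congr 1
    refine sum_congr rfl fun n _ => ?_
    simpa [add_comm] using ha.nat_mul k n

lemma Function.Periodic.abs_sum_range_le {a : ℕ → ℝ} {L : ℕ} (ha : Periodic a L) (hL : 0 < L)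
    {r : ℝ} (hr : ∀ t ∈ Icc 1 L, |∑ n ∈ range t, a n| ≤ t * r) (j : ℕ) :
    |∑ n ∈ range j, a n| ≤ j * r := by
  induction j using Nat.strong_induction_on with
  | _ j ih =>
    rcases Nat.eq_zero_or_pos j with rfl | hj
    · simp
    rcases le_or_gt j L with hjL | hjL
    · exact hr j (mem_Icc.mpr ⟨hj, hjL⟩)
    obtain ⟨m, rfl⟩ := Nat.exists_eq_add_of_lt hjL
    have hshift : ∑ n ∈ range (m + 1), a (L + n) = ∑ n ∈ range (m + 1), a n :=
      sum_congr rfl fun n _ => by rw [add_comm, ha n]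
    rw [add_assoc, sum_range_add, hshift]
    calc |∑ n ∈ range L, a n + ∑ n ∈ range (m + 1), a n|
        ≤ L * r + (m + 1 : ℕ) * r :=
          (abs_add_le _ _).trans (add_le_add (by simpa using hr L (mem_Icc.mpr ⟨hL, le_rfl⟩))
            (ih _ (by omega)))
      _ = ((L + (m + 1) : ℕ) : ℝ) * r := by push_cast; ring

/-- For periodic `a` the supremum is attained on a window of length at most `L`. -/
lemma Function.Periodic.maxAvg_le {a b : ℕ → ℝ} {L : ℕ} (ha : Periodic a L) (hL : 0 < L)
    (hab : ∀ n < L, a n = b n) : maxAvg a ≤ maxAvg b := by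
  obtain ⟨t, ht, htmax⟩ := exists_max_image (Icc 1 L)
    (fun t : ℕ => |∑ n ∈ range t, a n| / t) ⟨1, mem_Icc.mpr ⟨le_rfl, hL⟩⟩
  obtain ⟨ht1, htL⟩ := mem_Icc.mp ht
  have htpos : (0 : ℝ) < t := by exact_mod_cast ht1
  set r := |∑ n ∈ range t, a n| / t
  have hbound : ∀ j, |∑ n ∈ range j, a n| ≤ j * r := by
    refine ha.abs_sum_range_le hL fun s hs => ?_
    have hspos : (0 : ℝ) < s := by exact_mod_cast (mem_Icc.mp hs).1
    have := htmax s hs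
    rwa [div_le_iff₀ hspos, mul_comm] at this
  have hrb : ‖(∑ n ∈ range (t - 1 + 1), b n) / ((t - 1 : ℕ) + 1 : ℝ)‖ₑ = ENNReal.ofReal r := by
    rw [Nat.sub_add_cancel ht1, Nat.cast_sub ht1, Nat.cast_one, sub_add_cancel,
      ← sum_congr rfl fun n hn => hab n ((mem_range.mp hn).trans_le htL),
      Real.enorm_eq_ofReal_abs, abs_div, abs_of_pos htpos]
  refine iSup_le fun N => ?_
  refine le_trans ?_ ((le_iSup _ (t - 1)).trans_eq' hrb)
  rw [Real.enorm_eq_ofReal_abs]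
  refine ENNReal.ofReal_le_ofReal ?_
  rw [abs_div, abs_of_pos (by positivity : (0 : ℝ) < N + 1), div_le_iff₀ (by positivity)]
  simpa [mul_comm] using hbound (N + 1)

section Cyclic

variable (L : ℕ) (p : ℝ)

/- For an `L`-periodic `c`, viewed as a function on `ℤ/Lℤ` with counting measure, `cycMaxPow` and
`cycNormPow` are `‖M⁻c‖_p^p` and `‖c‖_p^p`, and `cycConstPow` is the `p`-th power of the best
constant in `‖M⁻c‖_p ≤ C ‖c‖_p` on `ℤ/Lℤ`. -/
def cycMaxPow (c : ℕ → ℝ) : ℝ≥0∞ := ∑ i ∈ range L, maxAvg (fun n => c (i + n)) ^ p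

def cycNormPow (c : ℕ → ℝ) : ℝ≥0∞ := ∑ i ∈ range L, ‖c i‖ₑ ^ p

def cycConstPow : ℝ≥0∞ := ⨆ (c : ℕ → ℝ) (_ : Periodic c L), cycMaxPow L p c / cycNormPow L p c

variable {L p}

lemma cycNormPow_ne_top (hp : 0 ≤ p) (c : ℕ → ℝ) : cycNormPow L p c ≠ ∞ :=
  (ENNReal.sum_lt_top.mpr fun _ _ => ENNReal.rpow_lt_top_of_nonneg hp enorm_ne_top).ne

lemma cycMaxPow_le (hp : 0 ≤ p) {c : ℕ → ℝ} (hc : Periodic c L) :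
    cycMaxPow L p c ≤ L * cycNormPow L p c := by
  rcases L.eq_zero_or_pos with rfl | hL
  · simp [cycMaxPow]
  obtain ⟨i₀, hi₀, hmax⟩ := exists_max_image (range L) (fun i => |c i|) ⟨0, mem_range.mpr hL⟩
  have hbound : ∀ n, |c n| ≤ |c i₀| := fun n => by
    simpa [hc.map_mod_nat] using hmax (n % L) (mem_range.mpr (Nat.mod_lt n hL))
  calc cycMaxPow L p c ≤ ∑ _i ∈ range L, ‖c i₀‖ₑ ^ p := by
        refine sum_le_sum fun i _ => ENNReal.rpow_le_rpow ?_ hp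
        rw [Real.enorm_eq_ofReal_abs]
        exact maxAvg_le_ofReal fun n => hbound (i + n)
    _ = L * ‖c i₀‖ₑ ^ p := by rw [sum_const, card_range, nsmul_eq_mul]
    _ ≤ L * cycNormPow L p c := by
        gcongr
        exact single_le_sum (f := fun i => ‖c i‖ₑ ^ p) (fun _ _ => zero_le) hi₀

lemma cycMaxPow_le_cycConstPow_mul (hp : 0 ≤ p) {c : ℕ → ℝ} (hc : Periodic c L) :
    cycMaxPow L p c ≤ cycConstPow L p * cycNormPow L p c := by
  by_cases hN : cycNormPow L p c = 0
  · simpa [hN] using cycMaxPow_le hp hc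
  rw [← ENNReal.div_le_iff hN (cycNormPow_ne_top hp c)]
  exact le_iSup₂ (f := fun d _ => cycMaxPow L p d / cycNormPow L p d) c hc

lemma cycConstPow_le (hp : 0 ≤ p) : cycConstPow L p ≤ L :=
  iSup₂_le fun _ hc => ENNReal.div_le_of_le_mul (cycMaxPow_le hp hc)

lemma cycMaxPow_le_cycMaxPow_abs (hp : 0 ≤ p) (c : ℕ → ℝ) :
    cycMaxPow L p c ≤ cycMaxPow L p fun n => |c n| :=
  sum_le_sum fun _ _ => ENNReal.rpow_le_rpow (maxAvg_le_maxAvg_abs _) hp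

lemma cycNormPow_abs (c : ℕ → ℝ) : cycNormPow L p (fun n => |c n|) = cycNormPow L p c := by
  simp [cycNormPow]

end Cyclic

section StrongConst

variable {μ : Measure X} {M : (X → ℝ) → X → ℝ≥0∞} {p : ℝ}

lemma eLpNorm_ofReal_eq (hp : 0 < p) (f : X → ℝ) :
    eLpNorm f (ENNReal.ofReal p) μ = (∫⁻ x, ‖f x‖ₑ ^ p ∂μ) ^ (1 / p) := by
  rw [eLpNorm_eq_lintegral_rpow_enorm_toReal (by simpa using hp) ofReal_ne_top,
    toReal_ofReal hp.le]

lemma strongConst_le_rpow (hp : 0 < p) {K : ℝ≥0∞}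
    (h : ∀ f, MemLp f (ENNReal.ofReal p) μ → ∫⁻ x, M f x ^ p ∂μ ≤ K * ∫⁻ x, ‖f x‖ₑ ^ p ∂μ) :
    strongConst μ M p ≤ K ^ (1 / p) := by
  refine sInf_le fun f hf => ?_
  rw [eLpNorm_ofReal_eq hp, ← ENNReal.mul_rpow_of_nonneg _ _ (by positivity)]
  exact ENNReal.rpow_le_rpow (h f hf) (by positivity)

lemma rpow_le_strongConst (hp : 0 < p) {K : ℝ≥0∞}
    (h : ∀ C : ℝ≥0∞, (∀ f, MemLp f (ENNReal.ofReal p) μ →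
      ∫⁻ x, M f x ^ p ∂μ ≤ C ^ p * ∫⁻ x, ‖f x‖ₑ ^ p ∂μ) → K ≤ C ^ p) :
    K ^ (1 / p) ≤ strongConst μ M p := by
  refine le_sInf fun C hC => ?_
  have hCp : K ≤ C ^ p := h C fun f hf => by
    have := ENNReal.rpow_le_rpow (hC f hf) hp.le
    rwa [eLpNorm_ofReal_eq hp, ENNReal.mul_rpow_of_nonneg _ _ hp.le, ← ENNReal.rpow_mul,
      ← ENNReal.rpow_mul, one_div_mul_cancel hp.ne', ENNReal.rpow_one, ENNReal.rpow_one] at this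
  calc K ^ (1 / p) ≤ (C ^ p) ^ (1 / p) := ENNReal.rpow_le_rpow hCp (by positivity)
    _ = C := by rw [← ENNReal.rpow_mul, mul_one_div_cancel hp.ne', ENNReal.rpow_one]

end StrongConst

section Integers

variable {L : ℕ} {p : ℝ} {c : ℕ → ℝ}

def cutoff (c : ℕ → ℝ) (K : ℕ) (j : ℤ) : ℝ := if 0 ≤ j ∧ j < K then c j.toNat else 0

lemma cutoff_natCast {K m : ℕ} (h : m < K) : cutoff c K m = c m := by
  simp [cutoff, h]

lemma cutoff_of_neg {K : ℕ} {j : ℤ} (h : j < 0) : cutoff c K j = 0 := by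
  simp [cutoff, h.not_ge]

lemma tsum_enorm_cutoff_rpow (hp : 0 < p) (hc : Periodic c L) (k : ℕ) :
    ∑' j, ‖cutoff c (k * L) j‖ₑ ^ p = k * cycNormPow L p c := by
  rw [tsum_eq_sum (s := (range (k * L)).map Nat.castEmbedding), sum_map]
  · have hsum := (hc.comp fun t : ℝ => ‖t‖ₑ ^ p).sum_range_mul k
    simp only [Function.comp_def] at hsum
    simp only [Nat.castEmbedding_apply]
    rw [sum_congr rfl fun m hm => by rw [cutoff_natCast (mem_range.mp hm)], hsum, nsmul_eq_mul,
      cycNormPow]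
  · intro j hj
    have hzero : cutoff c (k * L) j = 0 := by
      refine if_neg fun ⟨h0, h1⟩ => hj ?_
      simp only [Finset.mem_map, mem_range, Nat.castEmbedding_apply]
      exact ⟨j.toNat, by omega, by omega⟩
    rw [hzero, enorm_zero, ENNReal.zero_rpow_of_pos hp]

lemma memLp_cutoff (hp : 0 < p) (hc : Periodic c L) (k : ℕ) :
    MemLp (cutoff c (k * L)) (ENNReal.ofReal p) Measure.count := by
  refine ⟨(measurable_of_countable _).aestronglyMeasurable, ?_⟩
  rw [eLpNorm_ofReal_eq hp, lintegral_count, tsum_enorm_cutoff_rpow hp hc]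
  exact ENNReal.rpow_lt_top_of_nonneg (by positivity)
    (ENNReal.mul_ne_top (natCast_ne_top k) (cycNormPow_ne_top hp.le c))

lemma maxAvg_le_maxOS_cutoff (hL : 0 < L) (hc : Periodic c L) {i K : ℕ} (hiK : i + L ≤ K) :
    maxAvg (fun n => c (i + n)) ≤ maxOS shiftZ (cutoff c K) i := by
  rw [maxOS_shiftZ]
  refine (hc.const_add i).maxAvg_le hL fun n hn => ?_
  rw [← Nat.cast_add, cutoff_natCast (by omega)]

lemma ofReal_le_maxOS_cutoff_negSucc (hc : Periodic c L) (hc0 : ∀ n, 0 ≤ c n)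
    {k m : ℕ} (hm : m < k * L) :
    ENNReal.ofReal ((∑ i ∈ range L, c i) / (2 * L)) ≤
      maxOS shiftZ (cutoff c (k * L)) (Int.negSucc m) := by
  set P := ∑ i ∈ range L, c i
  have hP : 0 ≤ P := sum_nonneg fun i _ => hc0 i
  have hsum : ∑ n ∈ range (m + k * L + 1), cutoff c (k * L) (Int.negSucc m + n) = k * P := by
    have hleft : ∀ n ∈ range (m + 1), cutoff c (k * L) (Int.negSucc m + n) = 0 := fun n hn =>
      cutoff_of_neg (by have := mem_range.mp hn; omega)
    have hright : ∀ n ∈ range (k * L),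
        cutoff c (k * L) (Int.negSucc m + (m + 1 + n : ℕ)) = c n := fun n hn => by
      rw [show Int.negSucc m + (m + 1 + n : ℕ) = (n : ℤ) by omega,
        cutoff_natCast (mem_range.mp hn)]
    rw [show m + k * L + 1 = m + 1 + k * L by ring, sum_range_add, sum_eq_zero hleft,
      sum_congr rfl hright, zero_add, hc.sum_range_mul, nsmul_eq_mul]
  rw [maxOS_shiftZ]
  refine le_trans ?_ (le_iSup _ (m + k * L))
  rw [hsum, Real.enorm_eq_ofReal_abs]
  refine ENNReal.ofReal_le_ofReal ?_
  have hlen : ((m + k * L : ℕ) : ℝ) + 1 ≤ k * (2 * L) := by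
    have : m + k * L + 1 ≤ k * (2 * L) := by nlinarith
    exact_mod_cast this
  have hLpos : (0 : ℝ) < L := by exact_mod_cast Nat.pos_of_ne_zero (by rintro rfl; simp at hm)
  rw [abs_of_nonneg (by positivity), le_div_iff₀ (by positivity), div_mul_eq_mul_div,
    div_le_iff₀ (by positivity)]
  nlinarith

lemma cycNormPow_le (hp : 0 ≤ p) (hc0 : ∀ n, 0 ≤ c n) :
    cycNormPow L p c ≤ L * ENNReal.ofReal (∑ i ∈ range L, c i) ^ p := by
  calc cycNormPow L p c ≤ ∑ _i ∈ range L, ENNReal.ofReal (∑ i ∈ range L, c i) ^ p := by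
        refine sum_le_sum fun i hi => ENNReal.rpow_le_rpow ?_ hp
        rw [Real.enorm_eq_ofReal_abs, abs_of_nonneg (hc0 i)]
        exact ENNReal.ofReal_le_ofReal (single_le_sum (fun j _ => hc0 j) hi)
    _ = L * ENNReal.ofReal (∑ i ∈ range L, c i) ^ p := by
        rw [sum_const, card_range, nsmul_eq_mul]

lemma add_le_tsum_maxOS_cutoff (hL : 0 < L) (hp : 0 < p) (hc : Periodic c L)
    (hc0 : ∀ n, 0 ≤ c n) (n : ℕ) :
    n * cycMaxPow L p c + (n + 1) * (ENNReal.ofReal (1 / (2 * L)) ^ p * cycNormPow L p c) ≤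
      ∑' j, maxOS shiftZ (cutoff c ((n + 1) * L)) j ^ p := by
  set f := cutoff c ((n + 1) * L)
  set P := ∑ i ∈ range L, c i
  have hright : n * cycMaxPow L p c ≤ ∑ i ∈ range (n * L), maxOS shiftZ f i ^ p := by
    have hper : Periodic (fun i => maxAvg (fun m => c (i + m)) ^ p) L := fun i => by
      simp only [add_right_comm i L, hc _]
    rw [← nsmul_eq_mul, cycMaxPow, ← hper.sum_range_mul]
    refine sum_le_sum fun i hi => ENNReal.rpow_le_rpow (maxAvg_le_maxOS_cutoff hL hc ?_) hp.le
    have := mem_range.mp hi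
    nlinarith
  have hleft : (n + 1) * (ENNReal.ofReal (1 / (2 * L)) ^ p * cycNormPow L p c) ≤
      ∑ m ∈ range ((n + 1) * L), maxOS shiftZ f (Int.negSucc m) ^ p := by
    calc (n + 1) * (ENNReal.ofReal (1 / (2 * L)) ^ p * cycNormPow L p c)
        ≤ (n + 1) * (ENNReal.ofReal (1 / (2 * L)) ^ p * (L * ENNReal.ofReal P ^ p)) := by
          gcongr; exact cycNormPow_le hp.le hc0
      _ = ∑ _m ∈ range ((n + 1) * L), ENNReal.ofReal (P / (2 * L)) ^ p := by
          rw [sum_const, card_range, nsmul_eq_mul, div_eq_mul_one_div P,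
            ENNReal.ofReal_mul (sum_nonneg fun i _ => hc0 i),
            ENNReal.mul_rpow_of_nonneg _ _ hp.le]
          push_cast; ring
      _ ≤ _ := sum_le_sum fun m hm => ENNReal.rpow_le_rpow
          (ofReal_le_maxOS_cutoff_negSucc hc hc0 (mem_range.mp hm)) hp.le
  have hdisj : Disjoint ((range (n * L)).map Nat.castEmbedding)
      ((range ((n + 1) * L)).map ⟨Int.negSucc, fun _ _ => Int.negSucc.inj⟩) := by
    simp [Finset.disjoint_left]
  calc _ ≤ _ := add_le_add hright hleft
    _ = ∑ j ∈ (range (n * L)).map Nat.castEmbedding ∪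
          (range ((n + 1) * L)).map ⟨Int.negSucc, fun _ _ => Int.negSucc.inj⟩,
          maxOS shiftZ f j ^ p := by rw [sum_union hdisj, sum_map, sum_map]; rfl
    _ ≤ _ := ENNReal.sum_le_tsum _

lemma cycMaxPow_add_le_of_int (hL : 0 < L) (hp : 0 < p) (hc : Periodic c L) (hc0 : ∀ n, 0 ≤ c n)
    {C : ℝ≥0∞} (hC : ∀ f, MemLp f (ENNReal.ofReal p) Measure.count →
      ∫⁻ j, maxOS shiftZ f j ^ p ∂Measure.count ≤ C ^ p * ∫⁻ j, ‖f j‖ₑ ^ p ∂Measure.count) :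
    cycMaxPow L p c + ENNReal.ofReal (1 / (2 * L)) ^ p / 2 * cycNormPow L p c ≤
      C ^ p * cycNormPow L p c := by
  set δ := ENNReal.ofReal (1 / (2 * L)) ^ p
  set Φ := cycMaxPow L p c
  set N := cycNormPow L p c
  have hδ : δ / 2 ≠ 0 := (ENNReal.div_pos_iff.mpr ⟨(ENNReal.rpow_pos
    (ENNReal.ofReal_pos.mpr (by positivity)) ofReal_ne_top).ne', ofNat_ne_top⟩).ne'
  obtain ⟨n, hn⟩ := ENNReal.exists_nat_mul_gt hδ (natCast_ne_top L)
  have hΦ : Φ ≤ (n + 1) * (δ / 2) * N :=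
    (cycMaxPow_le hp.le hc).trans (by gcongr; exact hn.le.trans (by gcongr; exact le_self_add))
  have hf := hC _ (memLp_cutoff hp hc (n + 1))
  rw [lintegral_count, lintegral_count, tsum_enorm_cutoff_rpow hp hc] at hf
  refine (ENNReal.mul_le_mul_iff_right (a := n + 1) (by positivity) (by simp)).mp ?_
  calc ((n : ℝ≥0∞) + 1) * (Φ + δ / 2 * N) = n * Φ + Φ + (n + 1) * (δ / 2 * N) := by ring
    _ ≤ n * Φ + (n + 1) * (δ / 2) * N + (n + 1) * (δ / 2 * N) := by gcongr
    _ = n * Φ + (n + 1) * ((δ / 2 + δ / 2) * N) := by ring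
    _ = n * Φ + (n + 1) * (δ * N) := by rw [ENNReal.add_halves]
    _ ≤ ∑' j, maxOS shiftZ (cutoff c ((n + 1) * L)) j ^ p :=
        add_le_tsum_maxOS_cutoff hL hp hc hc0 n
    _ ≤ C ^ p * ((n + 1 : ℕ) * N) := hf
    _ = (n + 1) * (C ^ p * N) := by push_cast; ring

lemma cycConstPow_add_le_of_int (hL : 0 < L) (hp : 0 < p)
    {C : ℝ≥0∞} (hC : ∀ f, MemLp f (ENNReal.ofReal p) Measure.count →
      ∫⁻ j, maxOS shiftZ f j ^ p ∂Measure.count ≤ C ^ p * ∫⁻ j, ‖f j‖ₑ ^ p ∂Measure.count) :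
    cycConstPow L p + ENNReal.ofReal (1 / (2 * L)) ^ p / 2 ≤ C ^ p := by
  set δ := ENNReal.ofReal (1 / (2 * L)) ^ p
  have hratio : ∀ d : ℕ → ℝ, Periodic d L → (∀ n, 0 ≤ d n) → cycNormPow L p d ≠ 0 →
      cycMaxPow L p d / cycNormPow L p d + δ / 2 ≤ C ^ p := fun d hd hd0 hN => by
    have hNtop := cycNormPow_ne_top hp.le (L := L) d
    calc cycMaxPow L p d / cycNormPow L p d + δ / 2
        = (cycMaxPow L p d + δ / 2 * cycNormPow L p d) / cycNormPow L p d := by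
          rw [ENNReal.add_div, ENNReal.mul_div_cancel_right hN hNtop]
      _ ≤ C ^ p * cycNormPow L p d / cycNormPow L p d := by
          gcongr; exact cycMaxPow_add_le_of_int hL hp hd hd0 hC
      _ = C ^ p := ENNReal.mul_div_cancel_right hN hNtop
  have hδC : δ / 2 ≤ C ^ p :=
    le_add_self.trans (hratio (fun _ => 1) (fun _ => rfl) (fun _ => zero_le_one)
      (by simp [cycNormPow, hL.ne']))
  rw [cycConstPow, ENNReal.biSup_add' ⟨0, fun _ => rfl⟩]
  refine iSup₂_le fun c hc => ?_
  by_cases hN : cycNormPow L p c = 0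
  · have : cycMaxPow L p c = 0 := by simpa [hN] using cycMaxPow_le hp.le hc
    simpa [this, hN] using hδC
  calc cycMaxPow L p c / cycNormPow L p c + δ / 2
      ≤ cycMaxPow L p (fun n => |c n|) / cycNormPow L p (fun n => |c n|) + δ / 2 := by
        rw [cycNormPow_abs]; gcongr; exact cycMaxPow_le_cycMaxPow_abs hp.le c
    _ ≤ C ^ p :=
        hratio _ (hc.comp fun t : ℝ => |t|) (fun n => abs_nonneg _) (by rwa [cycNormPow_abs])

lemma rpow_cycConstPow_lt_strongConst_int (hL : 0 < L) (hp : 0 < p) :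
    cycConstPow L p ^ (1 / p) < strongConst Measure.count (maxOS shiftZ) p := by
  have hδ : ENNReal.ofReal (1 / (2 * L)) ^ p / 2 ≠ 0 := (ENNReal.div_pos_iff.mpr ⟨(ENNReal.rpow_pos
    (ENNReal.ofReal_pos.mpr (by positivity)) ofReal_ne_top).ne', ofNat_ne_top⟩).ne'
  calc cycConstPow L p ^ (1 / p)
      < (cycConstPow L p + ENNReal.ofReal (1 / (2 * L)) ^ p / 2) ^ (1 / p) :=
        ENNReal.rpow_lt_rpow (ENNReal.lt_add_right
          (ne_top_of_le_ne_top (natCast_ne_top L) (cycConstPow_le hp.le)) hδ) (by positivity)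
    _ ≤ strongConst Measure.count (maxOS shiftZ) p :=
        rpow_le_strongConst hp fun _ hC => cycConstPow_add_le_of_int hL hp hC

end Integers

lemma image_atom_subset {α : Type*} {T : Equiv.Perm α} {L : ℕ} {A : ℕ → Set α} (hL : 0 < L)
    (hmid : ∀ l, 1 ≤ l → l ≤ L - 1 → ⇑T '' A l ⊆ A (l + 1)) (hlast : ⇑T '' A L ⊆ A 1)
    (n : ℕ) : ⇑T '' A (n % L + 1) ⊆ A ((n + 1) % L + 1) := by
  rw [← Nat.mod_add_mod]
  rcases Nat.lt_or_eq_of_le (Nat.mod_lt n hL : n % L + 1 ≤ L) with h | h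
  · rw [Nat.mod_eq_of_lt h]
    exact hmid _ le_add_self (by omega)
  · rw [show n % L + 1 = L from h, Nat.mod_self]
    exact hlast

lemma pow_apply_mem_atom {α : Type*} {T : Equiv.Perm α} {L : ℕ} {A : ℕ → Set α}
    (hstep : ∀ n, ⇑T '' A (n % L + 1) ⊆ A ((n + 1) % L + 1)) {i : ℕ} {x : α}
    (hx : x ∈ A (i % L + 1)) (n : ℕ) : (T ^ n) x ∈ A ((i + n) % L + 1) := by
  induction n with
  | zero => simpa
  | succ n ih =>
    rw [pow_succ', Equiv.Perm.mul_apply, ← add_assoc]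
    exact hstep _ (Set.mem_image_of_mem _ ih)

section Atoms

variable {μ : Measure X}

lemma exists_ae_restrict_eq_const {S : Set X} (hS : MeasurableSet S)
    (hatom : ∀ U, MeasurableSet U → U ⊆ S → μ U = 0 ∨ μ (S \ U) = 0)
    {g : X → ℝ} (hg : AEMeasurable g μ) : ∃ v, g =ᵐ[μ.restrict S] fun _ => v := by
  have hgS := hg.restrict (s := S)
  have hsep : ∀ U, MeasurableSet U →
      (∀ᵐ x ∂μ.restrict S, hgS.mk g x ∈ U) ∨ ∀ᵐ x ∂μ.restrict S, hgS.mk g x ∉ U := by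
    intro U hU
    have hpre : MeasurableSet (hgS.mk g ⁻¹' U) := hgS.measurable_mk hU
    rcases hatom _ (hpre.inter hS) Set.inter_subset_right with h | h
    · right
      rw [ae_iff]
      simp only [not_not]
      exact (Measure.restrict_apply hpre).trans h
    · left
      rw [ae_iff, ← h]
      refine (Measure.restrict_apply hpre.compl).trans (congrArg μ ?_)
      ext x
      simp [and_comm]
  obtain ⟨v, hv⟩ := exists_eventuallyEq_const_of_forall_separating MeasurableSet hsep
  exact ⟨v, hgS.ae_eq_mk.trans hv⟩

variable {T : Equiv.Perm X} {L : ℕ} {A : ℕ → Set X}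

lemma measure_atom_eq (hT : MeasurePreserving T μ μ) (hL : 0 < L)
    (hmeas : ∀ l ≤ L, MeasurableSet (A l))
    (hstep : ∀ n, ⇑T '' A (n % L + 1) ⊆ A ((n + 1) % L + 1)) (n : ℕ) :
    μ (A (n % L + 1)) = μ (A 1) := by
  set u : ℕ → ℝ≥0∞ := fun n => μ (A (n % L + 1))
  have hmono : Monotone u := monotone_nat_of_le_succ fun n =>
    calc μ (A (n % L + 1)) ≤ μ (T ⁻¹' A ((n + 1) % L + 1)) :=
          measure_mono ((Set.subset_preimage_image _ _).trans (Set.preimage_mono (hstep n)))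
      _ = μ (A ((n + 1) % L + 1)) :=
          hT.measure_preimage (hmeas _ (Nat.mod_lt _ hL)).nullMeasurableSet
  have hu0 : u 0 = μ (A 1) := by simp [u]
  refine le_antisymm ?_ (hu0 ▸ hmono n.zero_le)
  calc u n ≤ u (L * (n + 1)) := hmono (by nlinarith)
    _ = u 0 := by simp [u, Nat.mul_mod_right]
    _ = μ (A 1) := hu0

lemma exists_periodic_ae_orbit_eq (hT : MeasurePreserving T μ μ) (hL : 0 < L)
    (hmeas : ∀ l ≤ L, MeasurableSet (A l))
    (hatom : ∀ l, 1 ≤ l → l ≤ L → ∀ S : Set X, MeasurableSet S → S ⊆ A l →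
      μ S = 0 ∨ μ (A l \ S) = 0)
    (hstep : ∀ n, ⇑T '' A (n % L + 1) ⊆ A ((n + 1) % L + 1)) {f : X → ℝ} (hf : AEMeasurable f μ) :
    ∃ c : ℕ → ℝ, Periodic c L ∧
      ∀ i, ∀ᵐ x ∂μ, x ∈ A (i % L + 1) → ∀ n, f ((T ^ n) x) = c (i + n) := by
  have hconst : ∀ r, ∃ v, f =ᵐ[μ.restrict (A (r % L + 1))] fun _ => v := fun r =>
    exists_ae_restrict_eq_const (hmeas _ (Nat.mod_lt r hL))
      (hatom _ le_add_self (Nat.mod_lt r hL)) hf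
  choose v hv using hconst
  refine ⟨fun n => v (n % L), fun n => by simp, fun i => ?_⟩
  have hpull : ∀ n, ∀ᵐ x ∂μ,
      (T ^ n) x ∈ A ((i + n) % L + 1) → f ((T ^ n) x) = v ((i + n) % L) := fun n => by
    have hTn : MeasurePreserving (⇑(T ^ n)) μ μ := by
      rw [Equiv.Perm.coe_pow]; exact hT.iterate n
    have hae := (ae_restrict_iff' (hmeas _ (Nat.mod_lt _ hL))).mp (hv ((i + n) % L))
    rw [Nat.mod_mod] at hae
    exact hTn.quasiMeasurePreserving.ae hae
  filter_upwards [ae_all_iff.mpr hpull] with x hx hxi n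
  exact hx n (pow_apply_mem_atom hstep hxi n)

lemma lintegral_eq_sum_atoms (hmeas : ∀ l ≤ L, MeasurableSet (A l))
    (hdisj : ∀ l l', l ≤ L → l' ≤ L → l ≠ l' → Disjoint (A l) (A l'))
    (hcover : ⋃ l ≤ L, A l = Set.univ) (hA0 : μ (A 0) = 0) (F : X → ℝ≥0∞) :
    ∫⁻ x, F x ∂μ = ∑ i ∈ range L, ∫⁻ x in A (i + 1), F x ∂μ := by
  have hcover' : ⋃ l ∈ range (L + 1), A l = Set.univ := by
    simpa [Nat.lt_succ_iff] using hcover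
  rw [← setLIntegral_univ, ← hcover', lintegral_biUnion_finset, sum_range_succ',
    setLIntegral_measure_zero _ _ hA0, add_zero]
  · exact fun l hl l' hl' hne => hdisj l l' (Nat.lt_succ_iff.mp (mem_range.mp hl))
      (Nat.lt_succ_iff.mp (mem_range.mp hl')) hne
  · exact fun l hl => hmeas l (Nat.lt_succ_iff.mp (mem_range.mp hl))

lemma strongConst_le_of_finitelyManyAtoms (hT : MeasurePreserving T μ μ)
    (hA : FinitelyManyAtoms μ T) {p : ℝ} (hp : 0 < p) :
    ∃ L, 0 < L ∧ strongConst μ (maxOS T) p ≤ cycConstPow L p ^ (1 / p) := by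
  obtain ⟨L, A, hL, hmeas, hdisj, hcover, hA0, hmid, hlast, hatom⟩ := hA
  have hstep := image_atom_subset hL hmid hlast
  have hint : ∀ (F : X → ℝ≥0∞) (G : ℕ → ℝ≥0∞), (∀ i < L, ∀ᵐ x ∂μ, x ∈ A (i + 1) → F x = G i) →
      ∫⁻ x, F x ∂μ = (∑ i ∈ range L, G i) * μ (A 1) := fun F G hFG => by
    rw [lintegral_eq_sum_atoms hmeas hdisj hcover hA0, sum_mul]
    refine sum_congr rfl fun i hi => ?_
    have hi := mem_range.mp hi
    rw [setLIntegral_congr_fun_ae (hmeas _ hi) (hFG i hi), setLIntegral_const,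
      ← measure_atom_eq hT hL hmeas hstep i, Nat.mod_eq_of_lt hi]
  refine ⟨L, hL, strongConst_le_rpow hp fun f hf => ?_⟩
  obtain ⟨c, hc, horbit⟩ := exists_periodic_ae_orbit_eq hT hL hmeas hatom hstep hf.1.aemeasurable
  have horbit' : ∀ i < L, ∀ᵐ x ∂μ, x ∈ A (i + 1) → ∀ n, f ((T ^ n) x) = c (i + n) :=
    fun i hi => by simpa [Nat.mod_eq_of_lt hi] using horbit i
  have hmax : ∫⁻ x, maxOS T f x ^ p ∂μ = cycMaxPow L p c * μ (A 1) :=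
    hint _ _ fun i hi => (horbit' i hi).mono fun x hx hxi => by
      simp only [maxOS_eq_maxAvg, hx hxi]
  have hnorm : ∫⁻ x, ‖f x‖ₑ ^ p ∂μ = cycNormPow L p c * μ (A 1) :=
    hint _ _ fun i hi => (horbit' i hi).mono fun x hx hxi => by
      simpa using congrArg (‖·‖ₑ ^ p) (hx hxi 0)
  rw [hmax, hnorm, ← mul_assoc]
  exact mul_le_mul_left (cycMaxPow_le_cycConstPow_mul hp.le hc) _

end Atoms

theorem oneSided_strict_atomic_general {X : Type*} [MeasurableSpace X] (μ : Measure X)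
    (T : Equiv.Perm X)
    (hT : MeasurePreserving (⇑T) μ μ)
    (hA : FinitelyManyAtoms μ T)
    (p : ℝ) (hp : 1 < p) :
    strongConst μ (maxOS T) p < strongConst (Measure.count : Measure ℤ) (maxOS shiftZ) p := by
  have hp0 : 0 < p := zero_lt_one.trans hp
  obtain ⟨L, hL, hX⟩ := strongConst_le_of_finitelyManyAtoms hT hA hp0
  exact hX.trans_lt (rpow_cycConstPow_lt_strongConst_int hL hp0)

/-- Case (A) of the dichotomy for the one-sided maximal operator: if a nontrivial σ-finite
ergodic system consists of finitely many atoms, then for every `p ∈ (1,∞)` the best strong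
type (p,p) constant is strictly smaller than its counterpart on the integers. -/
theorem oneSided_strict_atomic {X : Type*} [MeasurableSpace X] (μ : Measure X)
    [SigmaFinite μ] (hX : NontrivialSpace μ) (T : Equiv.Perm X)
    (hT : MeasurePreserving (⇑T) μ μ) (hTs : Measurable (⇑T.symm))
    (hE : IsErgodicPerm μ T) (hA : FinitelyManyAtoms μ T)
    (p : ℝ) (hp : 1 < p) :
    strongConst μ (maxOS T) p < strongConst (Measure.count : Measure ℤ) (maxOS shiftZ) p :=
  oneSided_strict_atomic_general μ T hT hA p hp

end
end

section
/- For the centered maximal operator on the finite cyclic shift system with L elements, the best weak type (1,1) constant is attained: there exists f₀ : {1,…,L} → [0,∞), f₀ not identically zero, with ‖M^c f₀‖_{1,∞} = C^c(X_[L], 1) · ‖f₀‖_{ℓ¹}, where ‖g‖_{1,∞} := sup_{λ>0} λ · #({x : |g(x)| ≥ λ}). -/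
open MeasureTheory ENNReal Filter Topology

noncomputable section

variable {X : Type*} [MeasurableSpace X]

/-- The cyclic shift `l ↦ l + 1` on the finite system `X_[L]` with `L` elements. -/
def shiftFin (L : ℕ) [NeZero L] : Equiv.Perm (Fin L) := Equiv.addRight 1

set_option linter.unusedSectionVars false

-- ==== helpers ====
namespace CWE

variable {L : ℕ} [NeZero L]

def avg (T : Equiv.Perm (Fin L)) (f : Fin L → ℝ) (N : ℕ) (x : Fin L) : ℝ :=
  (∑ n ∈ Finset.Icc (-(N : ℤ)) (N : ℤ), f ((T ^ n) x)) / (2 * (N : ℝ) + 1)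

lemma maxC_eq (T : Equiv.Perm (Fin L)) (f : Fin L → ℝ) (x : Fin L) :
    maxC T f x = ⨆ N : ℕ, (‖avg T f N x‖₊ : ℝ≥0∞) := rfl

lemma abs_avg_le (T : Equiv.Perm (Fin L)) (f : Fin L → ℝ) (N : ℕ) (x : Fin L) :
    |avg T f N x| ≤ ‖f‖ := by
  have hd : (0:ℝ) < 2*(N:ℝ)+1 := by positivity
  rw [avg, abs_div, abs_of_pos hd, div_le_iff₀ hd]
  calc |∑ n ∈ Finset.Icc (-(N:ℤ)) (N:ℤ), f ((T ^ n) x)|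
      ≤ ∑ n ∈ Finset.Icc (-(N:ℤ)) (N:ℤ), |f ((T ^ n) x)| := Finset.abs_sum_le_sum_abs _ _
    _ ≤ ∑ _n ∈ Finset.Icc (-(N:ℤ)) (N:ℤ), ‖f‖ :=
        Finset.sum_le_sum fun n _ => by simpa using norm_le_pi_norm f ((T ^ n) x)
    _ = ((Finset.Icc (-(N:ℤ)) (N:ℤ)).card : ℝ) * ‖f‖ := by
        rw [Finset.sum_const, nsmul_eq_mul]
    _ = ‖f‖ * (2*(N:ℝ)+1) := by
        rw [Int.card_Icc]
        have h2 : ((N:ℤ) + 1 - -(N:ℤ)).toNat = 2*N+1 := by omega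
        rw [h2]; push_cast; ring

lemma avg_sub (T : Equiv.Perm (Fin L)) (f g : Fin L → ℝ) (N : ℕ) (x : Fin L) :
    avg T (f - g) N x = avg T f N x - avg T g N x := by
  simp only [avg, Pi.sub_apply, Finset.sum_sub_distrib, sub_div]

lemma coe_nnnorm_avg (T : Equiv.Perm (Fin L)) (f : Fin L → ℝ) (N : ℕ) (x : Fin L) :
    (‖avg T f N x‖₊ : ℝ≥0∞) = ENNReal.ofReal |avg T f N x| := by
  rw [← Real.norm_eq_abs]; exact (ofReal_norm_eq_enorm _).symm

lemma le_maxC (T : Equiv.Perm (Fin L)) (f : Fin L → ℝ) (N : ℕ) (x : Fin L) :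
    ENNReal.ofReal |avg T f N x| ≤ maxC T f x := by
  rw [maxC_eq, ← coe_nnnorm_avg]
  exact le_iSup (fun N => (‖avg T f N x‖₊ : ℝ≥0∞)) N

lemma maxC_lip (T : Equiv.Perm (Fin L)) (f g : Fin L → ℝ) (x : Fin L) :
    maxC T f x ≤ maxC T g x + ENNReal.ofReal ‖f - g‖ := by
  rw [maxC_eq]
  refine iSup_le fun N => ?_
  have h1 : |avg T f N x| ≤ |avg T g N x| + ‖f - g‖ := by
    have h2 := abs_avg_le T (f - g) N x
    rw [avg_sub] at h2
    have h3 := abs_sub_abs_le_abs_sub (avg T f N x) (avg T g N x)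
    linarith
  calc (‖avg T f N x‖₊ : ℝ≥0∞) = ENNReal.ofReal |avg T f N x| := coe_nnnorm_avg ..
    _ ≤ ENNReal.ofReal (|avg T g N x| + ‖f - g‖) := ENNReal.ofReal_le_ofReal h1
    _ = ENNReal.ofReal |avg T g N x| + ENNReal.ofReal ‖f - g‖ :=
        ENNReal.ofReal_add (abs_nonneg _) (norm_nonneg _)
    _ ≤ maxC T g x + ENNReal.ofReal ‖f - g‖ := add_le_add_left (le_maxC T g N x) _

lemma maxC_le_norm (T : Equiv.Perm (Fin L)) (f : Fin L → ℝ) (x : Fin L) :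
    maxC T f x ≤ ENNReal.ofReal ‖f‖ := by
  rw [maxC_eq]
  refine iSup_le fun N => ?_
  rw [coe_nnnorm_avg]
  exact ENNReal.ofReal_le_ofReal (abs_avg_le ..)

lemma maxC_abs_le (T : Equiv.Perm (Fin L)) (f : Fin L → ℝ) (x : Fin L) :
    maxC T f x ≤ maxC T (fun y => |f y|) x := by
  rw [maxC_eq]
  refine iSup_le fun N => ?_
  rw [coe_nnnorm_avg]
  refine le_trans ?_ (le_maxC T _ N x)
  apply ENNReal.ofReal_le_ofReal
  have hd : (0:ℝ) < 2*(N:ℝ)+1 := by positivity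
  have hnn : 0 ≤ avg T (fun y => |f y|) N x :=
    div_nonneg (Finset.sum_nonneg fun n _ => abs_nonneg _) hd.le
  rw [abs_of_nonneg hnn, avg, avg, abs_div, abs_of_pos hd, div_le_div_iff_of_pos_right hd]
  exact Finset.abs_sum_le_sum_abs _ _

lemma maxC_smul (T : Equiv.Perm (Fin L)) (h : Fin L → ℝ) {c : ℝ} (hc : 0 ≤ c) (x : Fin L) :
    maxC T (fun y => c * h y) x = ENNReal.ofReal c * maxC T h x := by
  rw [maxC_eq, maxC_eq, ENNReal.mul_iSup]
  congr 1; funext N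
  have h1 : avg T (fun y => c * h y) N x = c * avg T h N x := by
    simp only [avg]
    rw [← Finset.mul_sum, mul_div_assoc]
  rw [coe_nnnorm_avg, coe_nnnorm_avg, h1, abs_mul, abs_of_nonneg hc,
    ENNReal.ofReal_mul hc]

-- the weak quasi-norm functional
def Wf (T : Equiv.Perm (Fin L)) (f : Fin L → ℝ) : ℝ≥0∞ :=
  ⨆ l : ℝ≥0∞, l * (Measure.count : Measure (Fin L)) {x | l ≤ maxC T f x}

lemma count_le (s : Set (Fin L)) : (Measure.count : Measure (Fin L)) s ≤ (L : ℝ≥0∞) := by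
  calc (Measure.count : Measure (Fin L)) s ≤ Measure.count Set.univ :=
        measure_mono (Set.subset_univ _)
    _ = (L : ℝ≥0∞) := by
        rw [← Finset.coe_univ, Measure.count_apply_finset]; simp

lemma term_le_Wf (T : Equiv.Perm (Fin L)) (f : Fin L → ℝ) (l : ℝ≥0∞) :
    l * (Measure.count : Measure (Fin L)) {x | l ≤ maxC T f x} ≤ Wf T f :=
  le_iSup (fun l => l * (Measure.count : Measure (Fin L)) {x | l ≤ maxC T f x}) l

lemma Wf_lip (T : Equiv.Perm (Fin L)) (f g : Fin L → ℝ) :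
    Wf T f ≤ Wf T g + ENNReal.ofReal ‖f - g‖ * (L : ℝ≥0∞) := by
  refine iSup_le fun l => ?_
  set ε := ENNReal.ofReal ‖f - g‖ with hε
  have hsub : {x : Fin L | l ≤ maxC T f x} ⊆ {x | l - ε ≤ maxC T g x} := by
    intro x hx
    simp only [Set.mem_setOf_eq] at hx ⊢
    exact tsub_le_iff_right.mpr (hx.trans (maxC_lip T f g x))
  calc l * (Measure.count : Measure (Fin L)) {x | l ≤ maxC T f x}
      ≤ ((l - ε) + ε) * (Measure.count : Measure (Fin L)) {x | l ≤ maxC T f x} :=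
        mul_le_mul_left le_tsub_add _
    _ = (l - ε) * (Measure.count : Measure (Fin L)) {x | l ≤ maxC T f x}
        + ε * (Measure.count : Measure (Fin L)) {x | l ≤ maxC T f x} := by rw [add_mul]
    _ ≤ (l - ε) * (Measure.count : Measure (Fin L)) {x | l - ε ≤ maxC T g x}
        + ε * (L : ℝ≥0∞) :=
        add_le_add (mul_le_mul' le_rfl (measure_mono hsub)) (mul_le_mul' le_rfl (count_le _))
    _ ≤ Wf T g + ε * (L : ℝ≥0∞) := add_le_add_left (term_le_Wf T g (l - ε)) _

-- the simplex
def Ksimplex (L : ℕ) [NeZero L] : Set (Fin L → ℝ) := {f | (∀ x, 0 ≤ f x) ∧ ∑ x, f x = 1}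

lemma norm_le_one_of_mem {f : Fin L → ℝ} (hf : f ∈ Ksimplex L) : ‖f‖ ≤ 1 := by
  rw [pi_norm_le_iff_of_nonneg zero_le_one]
  intro i
  rw [Real.norm_eq_abs, abs_of_nonneg (hf.1 i)]
  calc f i ≤ ∑ y, f y := Finset.single_le_sum (fun j _ => hf.1 j) (Finset.mem_univ i)
    _ = 1 := hf.2

def Cst (L : ℕ) [NeZero L] (T : Equiv.Perm (Fin L)) : ℝ≥0∞ := ⨆ f ∈ Ksimplex L, Wf T f

lemma Wf_le_norm (T : Equiv.Perm (Fin L)) (f : Fin L → ℝ) :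
    Wf T f ≤ ENNReal.ofReal ‖f‖ * (L : ℝ≥0∞) := by
  refine iSup_le fun l => ?_
  rcases Set.eq_empty_or_nonempty {x : Fin L | l ≤ maxC T f x} with h | ⟨x, hx⟩
  · simp [h]
  · exact mul_le_mul' (hx.trans (maxC_le_norm T f x)) (count_le _)

lemma Cst_le (T : Equiv.Perm (Fin L)) : Cst L T ≤ (L : ℝ≥0∞) := by
  refine iSup₂_le fun f hf => (Wf_le_norm T f).trans ?_
  calc ENNReal.ofReal ‖f‖ * (L : ℝ≥0∞) ≤ 1 * (L : ℝ≥0∞) := by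
        gcongr
        exact ENNReal.ofReal_le_one.mpr (norm_le_one_of_mem hf)
    _ = (L : ℝ≥0∞) := one_mul _

lemma Cst_ne_top (T : Equiv.Perm (Fin L)) : Cst L T ≠ ⊤ :=
  ((Cst_le T).trans_lt (by simp : ((L:ℝ≥0∞)) < ⊤)).ne

lemma elp (f : Fin L → ℝ) :
    eLpNorm f 1 (Measure.count : Measure (Fin L)) = ∑ x, (‖f x‖₊ : ℝ≥0∞) := by
  rw [eLpNorm_one_eq_lintegral_enorm, MeasureTheory.lintegral_count, tsum_fintype]
  rfl

lemma elp_ne_top (f : Fin L → ℝ) :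
    eLpNorm f 1 (Measure.count : Measure (Fin L)) ≠ ⊤ := by
  rw [elp]
  exact (ENNReal.sum_lt_top.mpr fun x _ => ENNReal.coe_lt_top).ne

lemma elp_nonneg {f : Fin L → ℝ} (hf : ∀ x, 0 ≤ f x) :
    eLpNorm f 1 (Measure.count : Measure (Fin L)) = ENNReal.ofReal (∑ x, f x) := by
  rw [elp, ENNReal.ofReal_sum_of_nonneg (fun i _ => hf i)]
  exact Finset.sum_congr rfl fun x _ => Real.enorm_eq_ofReal (hf x)

lemma Cst_mem (T : Equiv.Perm (Fin L)) :
    ∀ f : Fin L → ℝ, Integrable f (Measure.count : Measure (Fin L)) →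
      ∀ l : ℝ≥0∞, l * (Measure.count : Measure (Fin L)) {x | l ≤ maxC T f x} ≤
        Cst L T * eLpNorm f 1 (Measure.count : Measure (Fin L)) := by
  intro f _ l
  set g : Fin L → ℝ := fun y => |f y| with hg
  have hgpos : ∀ x, 0 ≤ g x := fun x => abs_nonneg _
  have hmono : {x : Fin L | l ≤ maxC T f x} ⊆ {x | l ≤ maxC T g x} :=
    fun x hx => hx.trans (maxC_abs_le T f x)
  have help : eLpNorm f 1 (Measure.count : Measure (Fin L))
      = eLpNorm g 1 (Measure.count : Measure (Fin L)) := by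
    rw [elp, elp]
    exact Finset.sum_congr rfl fun x _ => by simp [hg]
  rw [help]
  refine le_trans (mul_le_mul' le_rfl (measure_mono hmono)) ?_
  set s := ∑ x, g x with hs
  rcases eq_or_lt_of_le (Finset.sum_nonneg fun x _ => hgpos x) with hzero | hpos
  · have hg0 : ∀ x, g x = 0 := by
      intro x
      exact (Finset.sum_eq_zero_iff_of_nonneg (fun i _ => hgpos i)).mp hzero.symm x
        (Finset.mem_univ x)
    have hmc : ∀ x, maxC T g x = 0 := by
      intro x
      rw [maxC_eq]
      refine le_antisymm (iSup_le fun N => ?_) zero_le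
      have : avg T g N x = 0 := by simp [avg, hg0]
      simp [this]
    rcases eq_or_ne l 0 with rfl | hl
    · simp
    · have hemp : {x : Fin L | l ≤ maxC T g x} = ∅ := by
        ext x
        simp only [Set.mem_setOf_eq, hmc, Set.mem_empty_iff_false, iff_false]
        exact fun h => hl (nonpos_iff_eq_zero.mp h)
      simp [hemp]
  · set σ := ENNReal.ofReal s with hσ
    have hσ0 : σ ≠ 0 := by
      simp only [hσ, ne_eq, ENNReal.ofReal_eq_zero, not_le]
      exact hpos
    have hσt : σ ≠ ⊤ := ENNReal.ofReal_ne_top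
    set h : Fin L → ℝ := fun y => g y / s with hh
    have hgh : ∀ y, g y = s * h y := by
      intro y; rw [hh]; field_simp; exact (mul_div_cancel_right₀ (g y) (hpos.ne' : s ≠ 0)).symm
    have hhK : h ∈ Ksimplex L := by
      constructor
      · exact fun x => div_nonneg (hgpos x) hpos.le
      · rw [hh]
        simp only
        rw [← Finset.sum_div, ← hs]
        field_simp
        exact div_self (hpos.ne' : s ≠ 0)
    have hmax : ∀ x, maxC T g x = σ * maxC T h x := by
      intro x
      have : g = fun y => s * h y := funext hgh
      rw [this, maxC_smul T h hpos.le x, hσ]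
    have hset : {x : Fin L | l ≤ maxC T g x} = {x | l / σ ≤ maxC T h x} := by
      ext x
      simp only [Set.mem_setOf_eq, hmax]
      rw [ENNReal.div_le_iff_le_mul (Or.inl hσ0) (Or.inl hσt), mul_comm]
    have hWh : ∀ l' : ℝ≥0∞,
        l' * (Measure.count : Measure (Fin L)) {x | l' ≤ maxC T h x} ≤ Cst L T :=
      fun l' => (term_le_Wf T h l').trans (le_iSup₂ (f := fun f _ => Wf T f) h hhK)
    have helpg : eLpNorm g 1 (Measure.count : Measure (Fin L)) = σ := by
      rw [elp_nonneg hgpos, ← hs, hσ]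
    rw [helpg, hset]
    calc l * Measure.count {x | l / σ ≤ maxC T h x}
        = σ * ((l / σ) * Measure.count {x | l / σ ≤ maxC T h x}) := by
          rw [← mul_assoc, ENNReal.mul_div_cancel hσ0 hσt]
      _ ≤ σ * Cst L T := mul_le_mul' le_rfl (hWh _)
      _ = Cst L T * σ := mul_comm _ _

lemma weakConst_le_Cst (T : Equiv.Perm (Fin L)) :
    weakConst (Measure.count : Measure (Fin L)) (maxC T) ≤ Cst L T :=
  sInf_le (Cst_mem T)

lemma Wf_le_weakConst (T : Equiv.Perm (Fin L)) (f : Fin L → ℝ) :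
    Wf T f ≤ weakConst (Measure.count : Measure (Fin L)) (maxC T) *
      eLpNorm f 1 (Measure.count : Measure (Fin L)) := by
  refine iSup_le fun l => ?_
  set a := l * (Measure.count : Measure (Fin L)) {x | l ≤ maxC T f x} with ha
  set b := eLpNorm f 1 (Measure.count : Measure (Fin L)) with hb
  have hbt : b ≠ ⊤ := elp_ne_top f
  have hC : ∀ C ∈ {C | ∀ f : Fin L → ℝ, Integrable f (Measure.count : Measure (Fin L)) →
      ∀ l : ℝ≥0∞, l * Measure.count {x | l ≤ maxC T f x} ≤ C * eLpNorm f 1 Measure.count},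
      a ≤ C * b := fun C hC => hC f (Integrable.of_finite) l
  rcases eq_or_ne b 0 with hb0 | hb0
  · have h1 := hC _ (Cst_mem T)
    rw [hb0, mul_zero] at h1
    rw [hb0, mul_zero]
    exact h1
  · have hdiv : a / b ≤ weakConst (Measure.count : Measure (Fin L)) (maxC T) :=
      le_sInf fun C hCmem =>
        (ENNReal.div_le_iff_le_mul (Or.inl hb0) (Or.inl hbt)).mpr (hC C hCmem)
    calc a = a / b * b := (ENNReal.div_mul_cancel hb0 hbt).symm
      _ ≤ weakConst (Measure.count : Measure (Fin L)) (maxC T) * b :=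
          mul_le_mul' hdiv le_rfl

lemma Ksimplex_nonempty : (Ksimplex L).Nonempty := by
  refine ⟨fun _ => (L : ℝ)⁻¹, fun x => by positivity, ?_⟩
  have hL : (L : ℝ) ≠ 0 := Nat.cast_ne_zero.mpr (NeZero.ne L)
  rw [Finset.sum_const, Finset.card_univ, Fintype.card_fin, nsmul_eq_mul,
    mul_inv_cancel₀ hL]

lemma exists_max (T : Equiv.Perm (Fin L)) : ∃ f₀ ∈ Ksimplex L, Wf T f₀ = Cst L T := by
  have hK1 : Ksimplex L ⊆ Set.Icc (0 : Fin L → ℝ) 1 := by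
    rintro f ⟨h1, h2⟩
    refine ⟨fun x => h1 x, fun x => ?_⟩
    calc f x ≤ ∑ y, f y := Finset.single_le_sum (fun j _ => h1 j) (Finset.mem_univ x)
      _ = 1 := h2
  have hclosed : IsClosed (Ksimplex L) := by
    have h1 : IsClosed {f : Fin L → ℝ | ∀ x, 0 ≤ f x} := by
      have : {f : Fin L → ℝ | ∀ x, 0 ≤ f x} = ⋂ x, {f : Fin L → ℝ | 0 ≤ f x} := by
        ext f; simp
      rw [this]
      exact isClosed_iInter fun x => isClosed_le continuous_const (continuous_apply x)
    have h2 : IsClosed {f : Fin L → ℝ | ∑ x, f x = 1} :=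
      isClosed_eq (continuous_finset_sum _ fun i _ => continuous_apply i) continuous_const
    have : Ksimplex L = {f : Fin L → ℝ | ∀ x, 0 ≤ f x} ∩ {f | ∑ x, f x = 1} := rfl
    rw [this]
    exact h1.inter h2
  have hcpt : IsCompact (Ksimplex L) := (isCompact_Icc).of_isClosed_subset hclosed hK1
  have hexists : ∀ n : ℕ, ∃ f ∈ Ksimplex L,
      Cst L T ≤ Wf T f + ENNReal.ofReal (1/((n:ℝ)+1)) := by
    intro n
    by_contra hcon
    push_neg at hcon
    set η := ENNReal.ofReal (1/((n:ℝ)+1)) with hη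
    have hη0 : η ≠ 0 := by
      simp only [hη, ne_eq, ENNReal.ofReal_eq_zero, not_le]
      positivity
    have hηt : η ≠ ⊤ := ENNReal.ofReal_ne_top
    have hCpos : Cst L T ≠ 0 := by
      obtain ⟨f, hf⟩ := Ksimplex_nonempty (L := L)
      intro h0
      have := hcon f hf
      rw [h0] at this
      exact (this.trans_le zero_le).false
    have hle : Cst L T ≤ Cst L T - η := by
      refine iSup₂_le fun f hf => ?_
      have h4 := (hcon f hf).le
      exact ENNReal.le_sub_of_add_le_right hηt h4
    exact absurd (hle.trans_lt (ENNReal.sub_lt_self (Cst_ne_top T) hCpos hη0)) (lt_irrefl _)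
  choose F hF1 hF2 using hexists
  obtain ⟨f₀, hf₀K, φ, hφ, hconv⟩ := hcpt.tendsto_subseq hF1
  refine ⟨f₀, hf₀K, le_antisymm (le_iSup₂ (f := fun f _ => Wf T f) f₀ hf₀K) ?_⟩
  have key : ∀ n : ℕ, Cst L T ≤ Wf T f₀ +
      (ENNReal.ofReal (dist (F (φ n)) f₀) * (L : ℝ≥0∞) + ENNReal.ofReal (1/((φ n : ℝ)+1))) := by
    intro n
    calc Cst L T ≤ Wf T (F (φ n)) + ENNReal.ofReal (1/((φ n : ℝ)+1)) := hF2 (φ n)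
      _ ≤ (Wf T f₀ + ENNReal.ofReal ‖F (φ n) - f₀‖ * (L : ℝ≥0∞))
          + ENNReal.ofReal (1/((φ n : ℝ)+1)) :=
          add_le_add_left (Wf_lip T (F (φ n)) f₀) _
      _ = Wf T f₀ + (ENNReal.ofReal (dist (F (φ n)) f₀) * (L : ℝ≥0∞)
          + ENNReal.ofReal (1/((φ n : ℝ)+1))) := by rw [add_assoc, dist_eq_norm]
  have hd : Tendsto (fun n => dist (F (φ n)) f₀) atTop (𝓝 0) :=
    tendsto_iff_dist_tendsto_zero.mp hconv
  have hd2 : Tendsto (fun n => ENNReal.ofReal (dist (F (φ n)) f₀) * (L : ℝ≥0∞)) atTop (𝓝 0) := by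
    have h5 : Tendsto (fun n => ENNReal.ofReal (dist (F (φ n)) f₀)) atTop (𝓝 0) := by
      have := (ENNReal.continuous_ofReal.tendsto 0).comp hd
      simpa [Function.comp_def] using this
    have := ENNReal.Tendsto.mul_const h5 (Or.inr (by simp : (L:ℝ≥0∞) ≠ ⊤))
    simpa using this
  have hd3 : Tendsto (fun n => ENNReal.ofReal (1/((φ n : ℝ)+1))) atTop (𝓝 0) := by
    have h6 : Tendsto (fun n : ℕ => 1/((n:ℝ)+1)) atTop (𝓝 0) :=
      tendsto_one_div_add_atTop_nhds_zero_nat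
    have h7 : Tendsto (fun n => 1/((φ n : ℝ)+1)) atTop (𝓝 0) :=
      h6.comp hφ.tendsto_atTop
    have := (ENNReal.continuous_ofReal.tendsto 0).comp h7
    simpa [Function.comp_def] using this
  have hlim : Tendsto (fun n => Wf T f₀ +
      (ENNReal.ofReal (dist (F (φ n)) f₀) * (L : ℝ≥0∞) + ENNReal.ofReal (1/((φ n : ℝ)+1))))
      atTop (𝓝 (Wf T f₀)) := by
    have := Tendsto.add (tendsto_const_nhds (x := Wf T f₀)) (hd2.add hd3)
    simpa using this
  exact ge_of_tendsto' hlim key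

end CWE

/-- There is a nonzero nonnegative extremal function for the weak type (1,1) inequality for the
centered maximal operator on the finite cyclic shift system with `L` elements:
`‖M^c f₀‖_{1,∞} = C^c(X_[L], 1) · ‖f₀‖₁`. -/
theorem centered_weak_extremizer_cyclic (L : ℕ) [NeZero L] :
    ∃ f₀ : Fin L → ℝ, (∀ x, 0 ≤ f₀ x) ∧ f₀ ≠ 0 ∧
      (⨆ l : ℝ≥0∞, l * (Measure.count : Measure (Fin L)) {x | l ≤ maxC (shiftFin L) f₀ x}) =
        weakConst (Measure.count : Measure (Fin L)) (maxC (shiftFin L)) *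
          eLpNorm f₀ 1 (Measure.count : Measure (Fin L)) := by
  obtain ⟨f₀, hK, hW⟩ := CWE.exists_max (shiftFin L)
  have h1 : eLpNorm f₀ 1 (Measure.count : Measure (Fin L)) = 1 := by
    rw [CWE.elp_nonneg hK.1, hK.2, ENNReal.ofReal_one]
  refine ⟨f₀, hK.1, ?_, ?_⟩
  · intro h0
    rw [h0] at hK
    simpa using hK.2
  · have hWf : (⨆ l : ℝ≥0∞, l * (Measure.count : Measure (Fin L))
        {x | l ≤ maxC (shiftFin L) f₀ x}) = CWE.Wf (shiftFin L) f₀ := rfl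
    rw [hWf, hW, h1, mul_one]
    refine le_antisymm ?_ (CWE.weakConst_le_Cst (shiftFin L))
    rw [← hW]
    have := CWE.Wf_le_weakConst (shiftFin L) f₀
    rw [h1, mul_one] at this
    exact this


end
end
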